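/- arXiv:1509.06906 — 9 statements merged into one kernel-verified Lean document; each statement's English description precedes it below -/
import Mathlib

section
/- (Pliss Lemma) Given real numbers a_1, ..., a_n with a_i ≤ l for all i and with sum ∑ a_i > n·l', where l' < l, then for any l'' < l' there exist at least ((l'-l'')/(l-l''))·n indices i ∈ {1,...,n} such that for every k ≥ 1 with i + k - 1 ≤ n one has (1/k)·∑_{j=i}^{i+k-1} a_j > l''. -/
open scoped Classical

/-!
Put `b j = a j - l''` and call `i` a positive start if every block `b_i + ⋯ + b_{i+k-1}` inside
`[1, n]` is positive. Scanning `[1, n]` from the left, a non-starting index opens a block of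
non-positive sum, which may be skipped; hence the total sum of `b` is at most its sum over the
positive starts, which is at most `(l - l'')` times their number. Since the total exceeds
`n (l' - l'')`, the bound follows.
-/

open Finset

def IsPositiveStart (b : ℕ → ℝ) (n i : ℕ) : Prop :=
  ∀ k, 1 ≤ k → i + k - 1 ≤ n → 0 < ∑ j ∈ Icc i (i + k - 1), b j

lemma IsPositiveStart.pos {b : ℕ → ℝ} {n i : ℕ} (h : IsPositiveStart b n i) (hi : i ≤ n) :
    0 < b i := by
  simpa using h 1 le_rfl (by omega)

lemma exists_sum_Ioc_nonpos_of_not_isPositiveStart {b : ℕ → ℝ} {n t : ℕ}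
    (h : ¬ IsPositiveStart b n (t + 1)) :
    ∃ k, 1 ≤ k ∧ t + k ≤ n ∧ ∑ j ∈ Ioc t (t + k), b j ≤ 0 := by
  simp only [IsPositiveStart, not_forall, not_lt] at h
  obtain ⟨k, hk, hkn, hsum⟩ := h
  refine ⟨k, hk, by omega, ?_⟩
  rwa [← Icc_add_one_left_eq_Ioc, show t + k = t + 1 + k - 1 by omega]

lemma sum_Ioc_le_sum_filter_isPositiveStart (b : ℕ → ℝ) {n t : ℕ} (ht : t ≤ n) :
    ∑ j ∈ Ioc t n, b j ≤ ∑ j ∈ Ioc t n with IsPositiveStart b n j, b j := by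
  induction hd : n - t using Nat.strong_induction_on generalizing t with
  | _ d ih =>
  rw [sum_filter]
  rcases ht.eq_or_lt with rfl | hlt
  · simp
  by_cases hstart : IsPositiveStart b n (t + 1)
  · have hrest := ih (n - (t + 1)) (by omega) (t := t + 1) (by omega) rfl
    rw [sum_filter] at hrest
    rw [← sum_Ioc_consecutive _ t.le_succ hlt, ← sum_Ioc_consecutive _ t.le_succ hlt]
    simp only [Nat.Ioc_succ_singleton, sum_singleton, if_pos hstart]
    linarith
  · obtain ⟨k, hk, hkn, hblock⟩ := exists_sum_Ioc_nonpos_of_not_isPositiveStart hstart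
    have hrest := ih (n - (t + k)) (by omega) (t := t + k) hkn rfl
    rw [sum_filter] at hrest
    have hstarts : 0 ≤ ∑ j ∈ Ioc t (t + k), if IsPositiveStart b n j then b j else 0 := by
      refine sum_nonneg fun j hj => ?_
      split_ifs with hj'
      · exact (hj'.pos ((mem_Ioc.mp hj).2.trans hkn)).le
      · rfl
    rw [← sum_Ioc_consecutive _ (t.le_add_right k) hkn,
      ← sum_Ioc_consecutive _ (t.le_add_right k) hkn]
    linarith

/-- Pliss Lemma. -/
theorem stmt_1 (n : ℕ) (a : ℕ → ℝ) (l l' l'' : ℝ)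
    (h1 : l'' < l') (h2 : l' < l)
    (hbd : ∀ i, 1 ≤ i → i ≤ n → a i ≤ l)
    (hsum : (n : ℝ) * l' < ∑ i ∈ Finset.Icc 1 n, a i) :
    ((l' - l'') / (l - l'')) * n ≤
      (((Finset.Icc 1 n).filter (fun i =>
        ∀ k, 1 ≤ k → i + k - 1 ≤ n →
          l'' * k < ∑ j ∈ Finset.Icc i (i + k - 1), a j)).card : ℝ) := by
  set b : ℕ → ℝ := fun j => a j - l''
  have hgood : (Icc 1 n).filter (fun i => ∀ k, 1 ≤ k → i + k - 1 ≤ n →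
      l'' * k < ∑ j ∈ Icc i (i + k - 1), a j) = (Icc 1 n).filter (IsPositiveStart b n) := by
    refine filter_congr fun i _ => forall₂_congr fun k hk => imp_congr_right fun _ => ?_
    rw [sum_sub_distrib, sum_const, Nat.card_Icc, show i + k - 1 + 1 - i = k by omega,
      nsmul_eq_mul, sub_pos, mul_comm]
  have htotal : ∑ j ∈ Icc 1 n, b j = ∑ j ∈ Icc 1 n, a j - n * l'' := by
    simp [b, sum_sub_distrib]
  have hstarts : ∑ j ∈ (Icc 1 n).filter (IsPositiveStart b n), b j
      ≤ #((Icc 1 n).filter (IsPositiveStart b n)) * (l - l'') := by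
    rw [← nsmul_eq_mul]
    refine sum_le_card_nsmul _ _ _ fun j hj => ?_
    simp only [mem_filter, mem_Icc] at hj
    linarith [hbd j hj.1.1 hj.1.2]
  have hscan := sum_Ioc_le_sum_filter_isPositiveStart b n.zero_le
  rw [← Icc_add_one_left_eq_Ioc, zero_add] at hscan
  rw [hgood, div_mul_eq_mul_div, div_le_iff₀ (by linarith)]
  linarith
end

section
/- Let (q_n) be an increasing sequence of positive integers with q_{m+2} ≥ 2 q_m for all m and q_{n+1} ≥ q_n. Suppose α is irrational with denominators (q_n) and α is not of Brjuno type, i.e. ∑_{n≥0} log(q_{n+1})/q_n = +∞. Then for any H > 1 there exists a subsequence (q_{n_j}) such that q_{n_{j+1}} ≥ H^{q_{n_j}} for all j, and an infinite set J ⊂ N such that for all j ∈ J, ‖q_{n_j} α‖ < exp(-q_{n_j}/j^2). -/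
/-!
Cut ℕ into the blocks `[K i, K (i + 1))` of the greedy tower subsequence for `H`. Inside a block
`log q (n + 1) ≤ q (K i) * log H`, and `q` doubles every two steps, so a block all of whose
Brjuno terms are at most `1 / j ^ 2` contributes only `O(√j / j ^ 2)` to the Brjuno series.
Since the series diverges, for one parity `r` infinitely many blocks `2 * j + r` contain a term
above `1 / j ^ 2`, that is an `n` with `q (n + 1) > exp (q n / j ^ 2)`. Picking one index in each
block `2 * j + r`, such an `n` whenever there is one, gives the subsequence: consecutive picks
are a whole block apart, which yields the tower growth.
-/

open Finset Filter

noncomputable def brjunoTerm (q : ℕ → ℕ) (n : ℕ) : ℝ := Real.log (q (n + 1)) / q n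

structure DoublingSeq (q : ℕ → ℕ) : Prop where
  one_le : ∀ n, 1 ≤ q n
  mono : Monotone q
  two_mul_le : ∀ n, 2 * q n ≤ q (n + 2)

structure IsTowerSeq (q : ℕ → ℕ) (H : ℝ) (K : ℕ → ℕ) : Prop where
  strictMono : StrictMono K
  pow_le : ∀ i, H ^ q (K i) ≤ q (K (i + 1))
  lt_pow : ∀ i m, K i < m → m < K (i + 1) → (q m : ℝ) < H ^ q (K i)

theorem brjunoTerm_nonneg (q : ℕ → ℕ) (n : ℕ) : 0 ≤ brjunoTerm q n :=
  div_nonneg (Real.log_natCast_nonneg _) (Nat.cast_nonneg _)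

theorem one_div_lt_exp_neg_div_of_one_div_lt_brjunoTerm {q : ℕ → ℕ} {n : ℕ} {d : ℝ}
    (hq : 0 < q n) (hq' : 0 < q (n + 1)) (h : 1 / d < brjunoTerm q n) :
    1 / (q (n + 1) : ℝ) < Real.exp (-(q n : ℝ) / d) := by
  have hlog : (q n : ℝ) / d < Real.log (q (n + 1)) := by
    rw [brjunoTerm, lt_div_iff₀ (by exact_mod_cast hq)] at h
    rwa [div_eq_mul_one_div, mul_comm]
  calc 1 / (q (n + 1) : ℝ) = Real.exp (-Real.log (q (n + 1))) := by
        rw [Real.exp_neg, Real.exp_log (by exact_mod_cast hq'), one_div]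
    _ < Real.exp (-(q n : ℝ) / d) := by
        rw [neg_div]
        exact Real.exp_lt_exp.mpr (neg_lt_neg hlog)

namespace DoublingSeq

variable {q : ℕ → ℕ}

theorem two_pow_mul_le (hq : DoublingSeq q) (s m : ℕ) : 2 ^ s * q m ≤ q (m + 2 * s) := by
  induction s generalizing m with
  | zero => simp
  | succ s ih =>
    calc 2 ^ (s + 1) * q m = 2 ^ s * (2 * q m) := by ring
      _ ≤ 2 ^ s * q (m + 2) := Nat.mul_le_mul_left _ (hq.two_mul_le m)
      _ ≤ q (m + 2 + 2 * s) := ih (m + 2)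
      _ = q (m + 2 * (s + 1)) := by ring_nf

theorem tendsto_atTop (hq : DoublingSeq q) : Tendsto q atTop atTop :=
  tendsto_atTop_atTop_of_monotone hq.mono fun b => ⟨2 * b, calc
    b ≤ 2 ^ b := Nat.lt_two_pow_self.le
    _ ≤ 2 ^ b * q 0 := Nat.le_mul_of_pos_right _ (hq.one_le 0)
    _ ≤ q (0 + 2 * b) := hq.two_pow_mul_le b 0
    _ = q (2 * b) := by rw [zero_add]⟩

theorem sum_inv_Ico_le (hq : DoublingSeq q) (m c : ℕ) :
    ∑ n ∈ Ico m c, (q n : ℝ)⁻¹ ≤ 4 / q m := by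
  have hpos : ∀ n, (0 : ℝ) < q n := fun n => by exact_mod_cast hq.one_le n
  induction h : c - m using Nat.strong_induction_on generalizing m with
  | _ k ih =>
    rcases lt_or_ge (m + 1) c with hc | hc
    · have hnext : (q (m + 1) : ℝ)⁻¹ ≤ (q m : ℝ)⁻¹ :=
        inv_anti₀ (hpos m) (by exact_mod_cast hq.mono m.le_succ)
      have hdouble : 4 / (q (m + 2) : ℝ) ≤ 2 / q m := by
        have : (2 : ℝ) * q m ≤ q (m + 2) := by exact_mod_cast hq.two_mul_le m
        rw [div_le_div_iff₀ (hpos _) (hpos m)]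
        linarith
      have htail := ih (c - (m + 2)) (by omega) (m + 2) rfl
      rw [sum_eq_sum_Ico_succ_bot (by omega), sum_eq_sum_Ico_succ_bot (by omega)]
      calc (q m : ℝ)⁻¹ + ((q (m + 1) : ℝ)⁻¹ + ∑ n ∈ Ico (m + 1 + 1) c, (q n : ℝ)⁻¹)
          ≤ (q m : ℝ)⁻¹ + (q m : ℝ)⁻¹ + 2 / q m := by linarith
        _ = 4 / q m := by ring
    · calc ∑ n ∈ Ico m c, (q n : ℝ)⁻¹ ≤ ∑ n ∈ Ico m (m + 1), (q n : ℝ)⁻¹ :=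
            sum_le_sum_of_subset_of_nonneg (Ico_subset_Ico_right hc) fun n _ _ =>
              (inv_pos.mpr (hpos n)).le
        _ = 1 / q m := by simp
        _ ≤ 4 / q m := by gcongr; norm_num

/-- The first `2 * E` terms are at most `ε` each; beyond them `q n ≥ 2 ^ E * q a`, and the
remaining sum of `1 / q n` is geometric. -/
theorem sum_brjunoTerm_Ico_le (hq : DoublingSeq q) {a c E : ℕ} {ε : ℝ} (hε0 : 0 ≤ ε)
    (hε : ∀ n ∈ Ico a c, brjunoTerm q n ≤ ε)
    (hlog : ∀ n ∈ Ico a c, Real.log (q (n + 1)) ≤ 2 ^ E * ε * q a) :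
    ∑ n ∈ Ico a c, brjunoTerm q n ≤ (2 * E + 4) * ε := by
  rcases le_or_gt c (a + 2 * E) with hc | hc
  · have hcard : ((c - a : ℕ) : ℝ) ≤ 2 * E := by exact_mod_cast (by omega : c - a ≤ 2 * E)
    calc ∑ n ∈ Ico a c, brjunoTerm q n ≤ #(Ico a c) • ε := sum_le_card_nsmul _ _ _ hε
      _ ≤ (2 * E + 4) * ε := by
          rw [nsmul_eq_mul, Nat.card_Ico]
          gcongr
          linarith
  have head : ∑ n ∈ Ico a (a + 2 * E), brjunoTerm q n ≤ 2 * E * ε := by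
    calc ∑ n ∈ Ico a (a + 2 * E), brjunoTerm q n ≤ #(Ico a (a + 2 * E)) • ε :=
          sum_le_card_nsmul _ _ _ fun n hn => hε n (Ico_subset_Ico_right hc.le hn)
      _ = 2 * E * ε := by simp
  have tail : ∑ n ∈ Ico (a + 2 * E) c, brjunoTerm q n ≤ 4 * ε := by
    have hgrowth : (2 : ℝ) ^ E * q a ≤ q (a + 2 * E) := by exact_mod_cast hq.two_pow_mul_le E a
    have hpos : (0 : ℝ) < q (a + 2 * E) := by exact_mod_cast hq.one_le _
    calc ∑ n ∈ Ico (a + 2 * E) c, brjunoTerm q n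
        ≤ ∑ n ∈ Ico (a + 2 * E) c, 2 ^ E * ε * q a * (q n : ℝ)⁻¹ :=
          sum_le_sum fun n hn => by
            rw [brjunoTerm, div_eq_mul_inv]
            gcongr
            exact hlog n (Ico_subset_Ico_left (by omega) hn)
      _ = 2 ^ E * ε * q a * ∑ n ∈ Ico (a + 2 * E) c, (q n : ℝ)⁻¹ := by rw [mul_sum]
      _ ≤ 2 ^ E * ε * q a * (4 / q (a + 2 * E)) := by gcongr; exact hq.sum_inv_Ico_le _ _
      _ ≤ 4 * ε := by
          rw [mul_div_assoc', div_le_iff₀ hpos]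
          nlinarith [mul_le_mul_of_nonneg_left hgrowth hε0]
  rw [← sum_Ico_consecutive _ (by omega : a ≤ a + 2 * E) hc.le]
  linarith

end DoublingSeq

theorem exists_isTowerSeq {q : ℕ → ℕ} (hq : Tendsto q atTop atTop) (H : ℝ) :
    ∃ K, IsTowerSeq q H K := by
  classical
  have hex : ∀ a, ∃ m, a < m ∧ H ^ q a ≤ q m := fun a =>
    (((tendsto_natCast_atTop_atTop.comp hq).eventually_ge_atTop (H ^ q a)).and
      (eventually_gt_atTop a)).exists.imp fun _ h => ⟨h.2, h.1⟩
  let next a := Nat.find (hex a)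
  have hsucc : ∀ i, next^[i + 1] 0 = next (next^[i] 0) := fun i =>
    Function.iterate_succ_apply' next i 0
  refine ⟨fun i => next^[i] 0, strictMono_nat_of_lt_succ fun i => ?_, fun i => ?_,
    fun i m h1 h2 => ?_⟩
  · rw [hsucc]
    exact (Nat.find_spec (hex _)).1
  · rw [hsucc]
    exact (Nat.find_spec (hex _)).2
  · rw [hsucc] at h2
    exact not_le.mp fun h => Nat.find_min (hex _) h2 ⟨h1, h⟩

theorem sq_mul_log_le_two_pow {H : ℝ} (hH : 1 ≤ H) (j : ℕ) :
    (j : ℝ) ^ 2 * Real.log H ≤ 2 ^ (4 * Nat.sqrt j + ⌈H⌉₊) := by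
  have hj : j ^ 2 ≤ 2 ^ (4 * Nat.sqrt j) :=
    calc j ^ 2 ≤ ((Nat.sqrt j + 1) ^ 2) ^ 2 := Nat.pow_le_pow_left (Nat.lt_succ_sqrt' j).le 2
      _ ≤ ((2 ^ Nat.sqrt j) ^ 2) ^ 2 := by gcongr; exact Nat.lt_two_pow_self
      _ = 2 ^ (4 * Nat.sqrt j) := by ring
  have hlog : Real.log H ≤ 2 ^ ⌈H⌉₊ :=
    calc Real.log H ≤ H := Real.log_le_self (by linarith)
      _ ≤ ⌈H⌉₊ := Nat.le_ceil H
      _ ≤ 2 ^ ⌈H⌉₊ := by exact_mod_cast Nat.lt_two_pow_self.le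
  rw [pow_add]
  exact mul_le_mul (by exact_mod_cast hj) hlog (Real.log_nonneg hH) (by positivity)

theorem summable_natSqrt_div_sq : Summable fun j : ℕ => (Nat.sqrt j : ℝ) / (j : ℝ) ^ 2 := by
  refine (Real.summable_nat_rpow_inv.mpr (by norm_num : (1 : ℝ) < 3 / 2)).of_nonneg_of_le
    (fun j => by positivity) fun j => ?_
  rcases Nat.eq_zero_or_pos j with rfl | hj
  · simp
  have hj' : (0 : ℝ) < j := by exact_mod_cast hj
  calc (Nat.sqrt j : ℝ) / (j : ℝ) ^ 2 ≤ (j : ℝ) ^ (1 / 2 : ℝ) / (j : ℝ) ^ (2 : ℝ) := by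
        rw [← Real.sqrt_eq_rpow, Real.rpow_two]
        gcongr
        exact Real.nat_sqrt_le_real_sqrt
    _ = ((j : ℝ) ^ (3 / 2 : ℝ))⁻¹ := by
        rw [← Real.rpow_sub hj', ← Real.rpow_neg hj'.le]
        norm_num

theorem summable_mul_natSqrt_add_div_sq (a b : ℝ) :
    Summable fun j : ℕ => (a * Nat.sqrt j + b) / (j : ℝ) ^ 2 :=
  ((summable_natSqrt_div_sq.mul_left a).add
    ((Real.summable_one_div_nat_pow.mpr one_lt_two).mul_left b)).congr fun j => by ring

theorem summable_of_summable_sum_Ico {f : ℕ → ℝ} (hf : ∀ n, 0 ≤ f n) {K : ℕ → ℕ}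
    (hK : StrictMono K) (h : Summable fun i => ∑ n ∈ Ico (K i) (K (i + 1)), f n) :
    Summable f := by
  have hblocks : ∀ N, ∑ n ∈ range (K N), f n =
      ∑ n ∈ range (K 0), f n + ∑ i ∈ range N, ∑ n ∈ Ico (K i) (K (i + 1)), f n := by
    intro N
    induction N with
    | zero => simp
    | succ N ih =>
      rw [sum_range_succ, ← add_assoc, ← ih, sum_range_add_sum_Ico _ (hK.monotone N.le_succ)]
  refine summable_of_sum_range_le hf
    (c := ∑ n ∈ range (K 0), f n + ∑' i, ∑ n ∈ Ico (K i) (K (i + 1)), f n) fun N => ?_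
  calc ∑ n ∈ range N, f n ≤ ∑ n ∈ range (K N), f n :=
        sum_le_sum_of_subset_of_nonneg (range_subset_range.mpr hK.le_apply) fun n _ _ => hf n
    _ ≤ _ := by
        rw [hblocks]
        gcongr
        exact h.sum_le_tsum _ fun i _ => sum_nonneg fun n _ => hf n

namespace IsTowerSeq

variable {q : ℕ → ℕ} {H : ℝ} {K : ℕ → ℕ}

theorem sum_Ico_brjunoTerm_le (hK : IsTowerSeq q H K) (hq : DoublingSeq q) (i : ℕ) {E : ℕ}
    {ε : ℝ} (hε0 : 0 ≤ ε) (hE : Real.log H ≤ 2 ^ E * ε)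
    (hε : ∀ n ∈ Ico (K i) (K (i + 1)), brjunoTerm q n ≤ ε) :
    ∑ n ∈ Ico (K i) (K (i + 1)), brjunoTerm q n ≤ (2 * E + 5) * ε := by
  obtain ⟨b, hb⟩ : ∃ b, K (i + 1) = b + 1 :=
    Nat.exists_eq_add_one_of_ne_zero (hK.strictMono (lt_add_one i)).ne_bot
  have hib : K i ≤ b := by have := hK.strictMono (lt_add_one i); omega
  have hlog : ∀ n ∈ Ico (K i) b, Real.log (q (n + 1)) ≤ 2 ^ E * ε * q (K i) := fun n hn => by
    obtain ⟨h1, h2⟩ := mem_Ico.mp hn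
    calc Real.log (q (n + 1)) ≤ Real.log (H ^ q (K i)) :=
          Real.log_le_log (by exact_mod_cast hq.one_le _) (hK.lt_pow i _ (by omega) (by omega)).le
      _ = q (K i) * Real.log H := Real.log_pow _ _
      _ ≤ q (K i) * (2 ^ E * ε) := by gcongr
      _ = 2 ^ E * ε * q (K i) := by ring
  rw [hb] at hε ⊢
  have hinit := hq.sum_brjunoTerm_Ico_le hε0
    (fun n hn => hε n (Ico_subset_Ico_right b.le_succ hn)) hlog
  have hlast := hε b (by simp [hib])
  rw [sum_Ico_succ_top hib]
  linarith

theorem summable_sum_Ico_comp (hK : IsTowerSeq q H K) (hq : DoublingSeq q) (hH : 1 ≤ H)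
    (φ : ℕ → ℕ)
    (h : ∀ᶠ j in atTop, ∀ n ∈ Ico (K (φ j)) (K (φ j + 1)), brjunoTerm q n ≤ 1 / (j : ℝ) ^ 2) :
    Summable fun j => ∑ n ∈ Ico (K (φ j)) (K (φ j + 1)), brjunoTerm q n := by
  refine .of_norm_bounded_eventually_nat (summable_mul_natSqrt_add_div_sq 8 (2 * ⌈H⌉₊ + 5)) ?_
  filter_upwards [h, eventually_ge_atTop 1] with j hj hj1
  have hj0 : (0 : ℝ) < (j : ℝ) ^ 2 := by positivity
  have hE : Real.log H ≤ 2 ^ (4 * Nat.sqrt j + ⌈H⌉₊) * (1 / (j : ℝ) ^ 2) := by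
    rw [mul_one_div, le_div_iff₀ hj0, mul_comm]
    exact sq_mul_log_le_two_pow hH j
  rw [Real.norm_of_nonneg (sum_nonneg fun n _ => brjunoTerm_nonneg q n)]
  calc _ ≤ (2 * ((4 * Nat.sqrt j + ⌈H⌉₊ : ℕ) : ℝ) + 5) * (1 / (j : ℝ) ^ 2) :=
        hK.sum_Ico_brjunoTerm_le hq (φ j) (by positivity) hE hj
    _ = _ := by push_cast; ring

theorem exists_frequently_one_div_sq_lt (hK : IsTowerSeq q H K) (hq : DoublingSeq q)
    (hH : 1 ≤ H) (hB : ¬Summable (brjunoTerm q)) :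
    ∃ r, ∃ᶠ j in atTop, ∃ n ∈ Ico (K (2 * j + r)) (K (2 * j + r + 1)),
      1 / (j : ℝ) ^ 2 < brjunoTerm q n := by
  by_contra! h
  exact hB <| summable_of_summable_sum_Ico (brjunoTerm_nonneg q) hK.strictMono <|
    .even_add_odd (hK.summable_sum_Ico_comp hq hH _ (h 0))
      (hK.summable_sum_Ico_comp hq hH _ (h 1))

theorem strictMono_and_pow_le_of_mem (hK : IsTowerSeq q H K) (hmono : Monotone q) (hH : 1 ≤ H)
    (r : ℕ) {m : ℕ → ℕ} (hm : ∀ j, m j ∈ Ico (K (2 * j + r)) (K (2 * j + r + 1))) :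
    StrictMono m ∧ ∀ j, H ^ q (m j) ≤ q (m (j + 1)) := by
  have hnext : ∀ j, K (2 * j + r + 1 + 1) ≤ m (j + 1) := fun j => by
    have := (mem_Ico.mp (hm (j + 1))).1
    rwa [show 2 * (j + 1) + r = 2 * j + r + 1 + 1 by ring] at this
  refine ⟨strictMono_nat_of_lt_succ fun j => ?_, fun j => ?_⟩
  · exact ((mem_Ico.mp (hm j)).2.trans (hK.strictMono (Nat.lt_succ_self _))).trans_le (hnext j)
  · calc H ^ q (m j) ≤ H ^ q (K (2 * j + r + 1)) :=
          pow_le_pow_right₀ hH (hmono (mem_Ico.mp (hm j)).2.le)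
      _ ≤ q (K (2 * j + r + 1 + 1)) := hK.pow_le _
      _ ≤ q (m (j + 1)) := by exact_mod_cast hmono (hnext j)

end IsTowerSeq

theorem stmt_5_general (α : ℝ) (q : ℕ → ℕ)
    (hq1 : ∀ n, 1 ≤ q n) (hmono : ∀ n, q n ≤ q (n+1)) (hdouble : ∀ n, 2 * q n ≤ q (n+2))
    (happrox : ∀ n, |(q n : ℝ) * α - round ((q n : ℝ) * α)| ≤ 1 / (q (n+1) : ℝ))
    (hnonBrjuno : ¬ Summable (fun n => Real.log (q (n+1)) / (q n : ℝ)))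
    (H : ℝ) (hH : 1 < H) :
    ∃ nj : ℕ → ℕ, StrictMono nj ∧
      (∀ j, H ^ (q (nj j)) ≤ (q (nj (j+1)) : ℝ)) ∧
      ∃ J : Set ℕ, J.Infinite ∧ ∀ j ∈ J,
        |(q (nj j) : ℝ) * α - round ((q (nj j) : ℝ) * α)| <
          Real.exp (-(q (nj j) : ℝ) / (j : ℝ)^2) := by
  have hq : DoublingSeq q := ⟨hq1, monotone_nat_of_le_succ hmono, hdouble⟩
  obtain ⟨K, hK⟩ := exists_isTowerSeq hq.tendsto_atTop H
  obtain ⟨r, hr⟩ := hK.exists_frequently_one_div_sq_lt hq hH.le hnonBrjuno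
  set J := {j : ℕ | ∃ n ∈ Ico (K (2 * j + r)) (K (2 * j + r + 1)),
    1 / (j : ℝ) ^ 2 < brjunoTerm q n}
  have hchoice : ∀ j, ∃ n ∈ Ico (K (2 * j + r)) (K (2 * j + r + 1)),
      j ∈ J → 1 / (j : ℝ) ^ 2 < brjunoTerm q n := fun j => by
    by_cases hj : j ∈ J
    · obtain ⟨n, hn, h⟩ := hj
      exact ⟨n, hn, fun _ => h⟩
    · exact ⟨_, left_mem_Ico.mpr (hK.strictMono (Nat.lt_succ_self _)), fun h => absurd h hj⟩
  choose m hm hmJ using hchoice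
  obtain ⟨hmStrict, hmPow⟩ := hK.strictMono_and_pow_le_of_mem hq.mono hH.le r hm
  refine ⟨m, hmStrict, hmPow, J, Nat.frequently_atTop_iff_infinite.mp hr, fun j hj => ?_⟩
  exact (happrox (m j)).trans_lt
    (one_div_lt_exp_neg_div_of_one_div_lt_brjunoTerm (hq1 _) (hq1 _) (hmJ j hj))

/-- For a non-Brjuno irrational, there is a subsequence of denominators growing at least like
`H^{q_{n_j}}` along which the rotation number is extremely well approximated infinitely often. -/
theorem stmt_5 (α : ℝ) (hirr : Irrational α) (q : ℕ → ℕ)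
    (hq1 : ∀ n, 1 ≤ q n) (hmono : ∀ n, q n ≤ q (n+1)) (hdouble : ∀ n, 2 * q n ≤ q (n+2))
    (happrox : ∀ n, |(q n : ℝ) * α - round ((q n : ℝ) * α)| ≤ 1 / (q (n+1) : ℝ))
    (hnonBrjuno : ¬ Summable (fun n => Real.log (q (n+1)) / (q n : ℝ)))
    (H : ℝ) (hH : 1 < H) :
    ∃ nj : ℕ → ℕ, StrictMono nj ∧
      (∀ j, H ^ (q (nj j)) ≤ (q (nj (j+1)) : ℝ)) ∧
      ∃ J : Set ℕ, J.Infinite ∧ ∀ j ∈ J,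
        |(q (nj j) : ℝ) * α - round ((q (nj j) : ℝ) * α)| <
          Real.exp (-(q (nj j) : ℝ) / (j : ℝ)^2) :=
  stmt_5_general α q hq1 hmono hdouble happrox hnonBrjuno H hH
end

section
/- Let (q_n) be an increasing sequence of integers with q_{m+2} ≥ 2 q_m for all m and q_m ≥ m. Fix H > 1 and let (m_j) be defined so that q_{m_{j+1}-1} ≤ H^{q_{m_j}} and q_{m_{j+1}} ≥ H^{q_{m_j}}. If j is large and ∑_{m=m_j}^{m_{j+1}-1} log(q_{m+1})/q_m ≥ j^{-3/2}, then there exists l ∈ [m_j, m_{j+1}-1] with q_{l+1} ≥ exp(q_l / j^{1.6}). -/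
open Finset Real Filter Topology

/-! Let the block be `[a, c]` with `a = m j`, `c = m (j+1) - 1`. If no index `l` of it has
`q (l+1) ≥ exp (q l / j^1.6)`, every term `log q (i+1) / q i` of the block sum is below
`j^-1.6`. Call `i` a jump if `log q (i+1) ≥ √(q i)`. Two jumps `i < k < c` would give
`log q (k+1) ≥ exp (√(q i) / 2) ≥ (q i)^2 / 384`, whereas `log q (k+1) ≤ q a * log H`
by the block condition; so the block has at most two jumps, contributing at most `2 j^-1.6`.
Every other term is at most `1 / √(q i)`, and since `q` doubles every two steps these add up
to at most `7 / √(q a)`. As `q a ≥ H^(j-1)`, the total is eventually below `j^(-3/2)`. -/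

lemma two_pow_div_two_mul_le {q : ℕ → ℕ} (hq : Monotone q) (hdouble : ∀ n, 2 * q n ≤ q (n + 2))
    (a k : ℕ) : 2 ^ (k / 2) * q a ≤ q (a + k) := by
  have hstep : ∀ t, 2 ^ t * q a ≤ q (a + 2 * t) := by
    intro t
    induction t with
    | zero => simp
    | succ t ih =>
      calc 2 ^ (t + 1) * q a = 2 * (2 ^ t * q a) := by ring
        _ ≤ 2 * q (a + 2 * t) := Nat.mul_le_mul_left 2 ih
        _ ≤ q (a + 2 * (t + 1)) := hdouble _
  exact (hstep (k / 2)).trans (hq (by omega))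

lemma hasSum_pow_div_two {r : ℝ} (h0 : 0 ≤ r) (h1 : r < 1) :
    HasSum (fun k => r ^ (k / 2)) (2 / (1 - r)) := by
  have hgeom := hasSum_geometric_of_lt_one h0 h1
  convert HasSum.even_add_odd (f := fun k => r ^ (k / 2)) (by simpa using hgeom)
    (by simpa [Nat.add_div_of_dvd_right] using hgeom) using 1
  rw [div_eq_mul_inv]
  ring

lemma sum_one_div_sqrt_le {q : ℕ → ℕ} (hq : Monotone q) (hdouble : ∀ n, 2 * q n ≤ q (n + 2))
    {a : ℕ} (ha : 0 < q a) (n : ℕ) :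
    ∑ i ∈ Ico a n, 1 / √(q i) ≤ 7 / √(q a) := by
  have hterm : ∀ k, 1 / √(q (a + k)) ≤ (5 / 7 : ℝ) ^ (k / 2) / √(q a) := by
    intro k
    -- `(7/5)^2 ≤ 2`, and the ratio `5/7` makes the geometric bound `2 / (1 - 5/7) = 7`
    have hgrow : (7 / 5 : ℝ) ^ (k / 2) * √(q a) ≤ √(q (a + k)) := by
      rw [le_sqrt (by positivity) (by positivity)]
      calc ((7 / 5 : ℝ) ^ (k / 2) * √(q a)) ^ 2 = (49 / 25 : ℝ) ^ (k / 2) * q a := by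
            rw [mul_pow, sq_sqrt (by positivity), ← pow_mul, mul_comm (k / 2), pow_mul]
            norm_num
        _ ≤ 2 ^ (k / 2) * q a := by gcongr; norm_num
        _ ≤ q (a + k) := by exact_mod_cast two_pow_div_two_mul_le hq hdouble a k
    calc 1 / √(q (a + k)) ≤ 1 / ((7 / 5 : ℝ) ^ (k / 2) * √(q a)) :=
          one_div_le_one_div_of_le (by positivity) hgrow
      _ = (5 / 7 : ℝ) ^ (k / 2) / √(q a) := by rw [← div_div, one_div, ← inv_pow, inv_div]
  have hsum := hasSum_pow_div_two (r := 5 / 7) (by norm_num) (by norm_num)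
  norm_num at hsum
  rw [sum_Ico_eq_sum_range]
  calc ∑ k ∈ range (n - a), 1 / √(q (a + k))
      ≤ ∑ k ∈ range (n - a), (5 / 7 : ℝ) ^ (k / 2) / √(q a) := sum_le_sum fun k _ => hterm k
    _ = (∑ k ∈ range (n - a), (5 / 7 : ℝ) ^ (k / 2)) / √(q a) := (sum_div ..).symm
    _ ≤ 7 / √(q a) := by gcongr; exact sum_le_hasSum _ (fun _ _ => by positivity) hsum

lemma sq_div_le_log_of_sqrt_le_log {q : ℕ → ℕ} (hq : Monotone q) {i k : ℕ} (hik : i < k)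
    (hi0 : 0 < q i) (hi : √(q i) ≤ log (q (i + 1))) (hk : √(q k) ≤ log (q (k + 1))) :
    (q i : ℝ) ^ 2 / 384 ≤ log (q (k + 1)) := by
  have hexp : exp √(q i) ≤ q k := by
    calc exp √(q i) ≤ exp (log (q (i + 1))) := exp_le_exp.2 hi
      _ = q (i + 1) := exp_log (by exact_mod_cast hi0.trans_le (hq i.le_succ))
      _ ≤ q k := by exact_mod_cast hq hik
  calc (q i : ℝ) ^ 2 / 384 = (√(q i) / 2) ^ 4 / (Nat.factorial 4 : ℕ) := by
        rw [show (√(q i) / 2) ^ 4 = (√(q i) ^ 2) ^ 2 / 16 by ring, sq_sqrt (by positivity)]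
        norm_num [Nat.factorial]
        ring
    _ ≤ exp (√(q i) / 2) := pow_div_factorial_le_exp _ (by positivity) 4
    _ = √(exp √(q i)) := exp_half _
    _ ≤ √(q k) := sqrt_le_sqrt hexp
    _ ≤ log (q (k + 1)) := hk

lemma card_filter_sqrt_le_log_le_one {q : ℕ → ℕ} (hq : Monotone q) {H : ℝ} {a c : ℕ}
    (ha : 0 < q a) (hH : 384 * log H < q a) (hc : (q c : ℝ) ≤ H ^ q a) :
    #{i ∈ Ico a c | √(q i) ≤ log (q (i + 1))} ≤ 1 := by
  refine card_le_one.2 fun i hi k hk => ?_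
  simp only [mem_filter, mem_Ico] at hi hk
  by_contra hne
  wlog hik : i < k generalizing i k
  · exact this k i hk hi (Ne.symm hne) (by omega)
  have hqa : (q a : ℝ) ≤ q i := by exact_mod_cast hq hi.1.1
  have hlog : log (q (k + 1)) ≤ q a * log H := by
    calc log (q (k + 1)) ≤ log (H ^ q a) :=
          log_le_log (by exact_mod_cast ha.trans_le (hq (by omega)))
            ((Nat.cast_le.2 (hq (by omega))).trans hc)
      _ = q a * log H := log_pow _ _
  have := sq_div_le_log_of_sqrt_le_log hq hik (ha.trans_le (hq hi.1.1)) hi.2 hk.2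
  have ha' : (0 : ℝ) < q a := by exact_mod_cast ha
  nlinarith

theorem sum_log_div_le_of_lt_exp {q : ℕ → ℕ} (hq : Monotone q)
    (hdouble : ∀ n, 2 * q n ≤ q (n + 2)) {H D : ℝ} (hD : 0 < D) {a c : ℕ} (hac : a ≤ c)
    (ha : 0 < q a) (hH : 384 * log H < q a) (hc : (q c : ℝ) ≤ H ^ q a)
    (hsmall : ∀ i ∈ Ico a (c + 1), (q (i + 1) : ℝ) < exp (q i / D)) :
    ∑ i ∈ Ico a (c + 1), log (q (i + 1)) / q i ≤ 2 / D + 7 / √(q a) := by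
  have hpos : ∀ i, a ≤ i → (0 : ℝ) < q i := fun i hi => by exact_mod_cast ha.trans_le (hq hi)
  have hterm : ∀ i ∈ Ico a (c + 1), log (q (i + 1)) / q i ≤ 1 / D := by
    intro i hi
    have hai := (mem_Ico.1 hi).1
    have hlog := (log_lt_iff_lt_exp (hpos (i + 1) (by omega))).2 (hsmall i hi)
    rw [div_le_div_iff₀ (hpos i hai) hD, one_mul]
    exact ((lt_div_iff₀ hD).1 hlog).le
  have hflat : ∀ i ∈ Ico a c, ¬ √(q i) ≤ log (q (i + 1)) →
      log (q (i + 1)) / q i ≤ 1 / √(q i) := by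
    intro i hi hlt
    rw [← sqrt_div_self']
    exact div_le_div_of_nonneg_right (not_le.1 hlt).le (hpos i (mem_Ico.1 hi).1).le
  rw [sum_Ico_succ_top hac, ← sum_filter_add_sum_filter_not (Ico a c)
    (fun i => √(q i) ≤ log (q (i + 1)))]
  calc _ ≤ 1 • (1 / D) + 7 / √(q a) + 1 / D := by
        gcongr ?_ + ?_ + ?_
        · refine (sum_le_card_nsmul _ _ _ fun i hi => hterm i ?_).trans
            (nsmul_le_nsmul_left (by positivity) (card_filter_sqrt_le_log_le_one hq ha hH hc))
          exact Ico_subset_Ico_right c.le_succ (mem_filter.1 hi).1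
        · calc _ ≤ ∑ i ∈ Ico a c with ¬ √(q i) ≤ log (q (i + 1)), 1 / √(q i) :=
                sum_le_sum fun i hi => hflat i (mem_filter.1 hi).1 (mem_filter.1 hi).2
            _ ≤ ∑ i ∈ Ico a c, 1 / √(q i) :=
                sum_le_sum_of_subset_of_nonneg (filter_subset _ _) fun _ _ _ => by positivity
            _ ≤ 7 / √(q a) := sum_one_div_sqrt_le hq hdouble ha c
        · exact hterm c (by simp [hac])
    _ = 2 / D + 7 / √(q a) := by rw [one_smul]; ring

lemma two_div_add_seven_div_sqrt_lt {j x : ℝ} (hj : 4 ^ 10 ≤ j) (hx : 196 * j ^ 3 < x) :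
    2 / j ^ (1.6 : ℝ) + 7 / √x < 1 / j ^ ((3 : ℝ) / 2) := by
  have hj0 : 0 < j := lt_of_lt_of_le (by norm_num) hj
  have ht : 4 ≤ j ^ ((1 : ℝ) / 10) := by
    calc (4 : ℝ) = ((4 : ℝ) ^ (10 : ℝ)) ^ ((1 : ℝ) / 10) := by
          rw [← rpow_mul (by norm_num)]; norm_num
      _ ≤ j ^ ((1 : ℝ) / 10) :=
          rpow_le_rpow (by positivity) (by norm_num at hj ⊢; exact hj) (by norm_num)
  have hsplit : j ^ (1.6 : ℝ) = j ^ ((3 : ℝ) / 2) * j ^ ((1 : ℝ) / 10) := by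
    rw [← rpow_add hj0]; norm_num
  have hsqrt : 14 * j ^ ((3 : ℝ) / 2) < √x := by
    rw [lt_sqrt (by positivity), mul_pow, ← rpow_mul_natCast hj0.le]
    norm_num
    linarith
  rw [hsplit]
  calc 2 / (j ^ ((3 : ℝ) / 2) * j ^ ((1 : ℝ) / 10)) + 7 / √x
      < 2 / (j ^ ((3 : ℝ) / 2) * 4) + 7 / (14 * j ^ ((3 : ℝ) / 2)) :=
        add_lt_add_of_le_of_lt (by gcongr) (by gcongr)
    _ = 1 / j ^ ((3 : ℝ) / 2) := by field_simp; ring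

lemma eventually_const_mul_pow_lt_pow {H : ℝ} (hH : 1 < H) (C : ℝ) (k : ℕ) :
    ∀ᶠ n : ℕ in atTop, C * (n : ℝ) ^ k < H ^ n := by
  have hlim : Tendsto (fun n : ℕ => C * ((n : ℝ) ^ k / H ^ n)) atTop (𝓝 0) := by
    simpa using (tendsto_pow_const_div_const_pow_of_one_lt k hH).const_mul C
  filter_upwards [hlim.eventually_lt_const one_pos] with n hn
  rwa [← mul_div_assoc, div_lt_one (pow_pos (by linarith) n)] at hn

/-- The block lemma: a block carrying at least `j^{-3/2}` of the Brjuno sum contains an index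
with `q_{l+1} ≥ exp(q_l / j^{1.6})`. -/
theorem stmt_6 (q : ℕ → ℕ) (hmono : ∀ n, q n ≤ q (n+1)) (hdouble : ∀ n, 2 * q n ≤ q (n+2))
    (hqm : ∀ n, n ≤ q n) (H : ℝ) (hH : 1 < H)
    (m : ℕ → ℕ) (hm : ∀ j, m j < m (j+1))
    (hblock : ∀ j, (q (m (j+1) - 1) : ℝ) ≤ H ^ (q (m j)) ∧ H ^ (q (m j)) ≤ (q (m (j+1)) : ℝ)) :
    ∃ J : ℕ, ∀ j ≥ J,
      (1 / (j : ℝ) ^ ((3:ℝ)/2) ≤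
          ∑ i ∈ Finset.Ico (m j) (m (j+1)), Real.log (q (i+1)) / (q i : ℝ)) →
      ∃ l, m j ≤ l ∧ l ≤ m (j+1) - 1 ∧
        Real.exp ((q l : ℝ) / (j : ℝ) ^ ((1.6 : ℝ))) ≤ (q (l+1) : ℝ) := by
  have hq : Monotone q := monotone_nat_of_le_succ hmono
  have hj_le : ∀ j : ℕ, (j : ℝ) ≤ q (m j) := fun j =>
    by exact_mod_cast ((strictMono_nat_of_lt_succ hm).id_le j).trans (hqm _)
  refine eventually_atTop.1 ?_
  filter_upwards [eventually_ge_atTop (4 ^ 10), eventually_const_mul_pow_lt_pow hH (196 * H) 3,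
    tendsto_natCast_atTop_atTop.eventually_gt_atTop (384 * log H)] with j hj hgrowth hjlog hsum
  by_contra! hnone
  have hj1 : j ≠ 0 := by omega
  have hqa : H ^ (j - 1) ≤ q (m j) := by
    have hprev := (hblock (j - 1)).2
    rw [Nat.sub_add_cancel (Nat.one_le_iff_ne_zero.2 hj1)] at hprev
    exact (pow_le_pow_right₀ hH.le (by exact_mod_cast hj_le (j - 1))).trans hprev
  have hbig : 196 * (j : ℝ) ^ 3 < q (m j) := by
    rw [← pow_sub_one_mul hj1] at hgrowth
    nlinarith
  have hjpos : (0 : ℝ) < j := by positivity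
  have hlast : m (j + 1) - 1 + 1 = m (j + 1) := Nat.sub_add_cancel (by have := hm j; omega)
  have hsmall : ∀ i ∈ Ico (m j) (m (j + 1) - 1 + 1),
      (q (i + 1) : ℝ) < exp (q i / (j : ℝ) ^ (1.6 : ℝ)) := fun i hi =>
    hnone i (mem_Ico.1 hi).1 (by have := (mem_Ico.1 hi).2; omega)
  have hsum_le := sum_log_div_le_of_lt_exp hq hdouble (rpow_pos_of_pos hjpos _)
    (by have := hm j; omega) (by exact_mod_cast hjpos.trans_le (hj_le j))
    (hjlog.trans_le (hj_le j)) (hblock j).1 hsmall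
  rw [hlast] at hsum_le
  have := two_div_add_seven_div_sqrt_lt (by exact_mod_cast hj) hbig
  linarith
end

section
/- Let λ_j^s, λ_j^u be real sequences (0 ≤ j ≤ L-1) with |λ_j^s|, |λ_j^u| ≤ a, and define λ̄_j^e = min(λ_j^u, -λ_j^s) and λ_j^e = min(λ_j^u, λ_j^u - λ_j^s, -2λ_j^s). Suppose (1/k)∑_{j=0}^{k-1} λ̄_j^e > (1 - 1/1000)·a for all 1 ≤ k ≤ L. Then for all 1 ≤ k ≤ L: (i) (1/k)∑_{j=0}^{k-1} λ_j^s < -a/2; (ii) (1/k)∑_{j=0}^{k-1} λ_j^e > (1 - 1/100)·a; (iii) (1/k)∑_{j=0}^{k-1} min(3λ_j^e, 0) > -a/10. -/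
/-- Lemma 2.1 of the paper: consequences of the forward `(L,a)`-good condition. -/
theorem stmt_8 (L : ℕ) (hL : 1 ≤ L) (a : ℝ) (ha : 0 < a) (ls lu : ℕ → ℝ)
    (hbd : ∀ j < L, |ls j| ≤ a ∧ |lu j| ≤ a)
    (hgood : ∀ k, 1 ≤ k → k ≤ L →
      (1 - 1/1000) * a < (1/(k:ℝ)) * ∑ j ∈ Finset.range k, min (lu j) (-(ls j))) :
    ∀ k, 1 ≤ k → k ≤ L →
      ((1/(k:ℝ)) * ∑ j ∈ Finset.range k, ls j < -(a/2)) ∧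
      ((1 - 1/100) * a < (1/(k:ℝ)) * ∑ j ∈ Finset.range k,
        min (lu j) (min (lu j - ls j) (-(2 * ls j)))) ∧
      (-(a/10) < (1/(k:ℝ)) * ∑ j ∈ Finset.range k,
        min (3 * min (lu j) (min (lu j - ls j) (-(2 * ls j)))) 0) := by
  intro k hk1 hkL
  have hk0 : (0:ℝ) < (k:ℝ) := by exact_mod_cast hk1
  set S := ∑ j ∈ Finset.range k, min (lu j) (-(ls j)) with hSdef
  have hSgt : (1 - 1/1000) * a * k < S := by
    have h := hgood k hk1 hkL
    rw [one_div_mul_eq_div, lt_div_iff₀ hk0] at h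
    exact h
  have hpt : ∀ j ∈ Finset.range k,
      ls j ≤ -(min (lu j) (-(ls j))) ∧
      2 * min (lu j) (-(ls j)) - a ≤ min (lu j) (min (lu j - ls j) (-(2 * ls j))) ∧
      6 * min (lu j) (-(ls j)) - 6 * a ≤
        min (3 * min (lu j) (min (lu j - ls j) (-(2 * ls j)))) 0 := by
    intro j hj
    obtain ⟨hs, hu⟩ := hbd j (lt_of_lt_of_le (Finset.mem_range.mp hj) hkL)
    have h1 : min (lu j) (-(ls j)) ≤ lu j := min_le_left _ _
    have h2 : min (lu j) (-(ls j)) ≤ -(ls j) := min_le_right _ _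
    have hua : lu j ≤ a := (abs_le.mp hu).2
    have hsa : -a ≤ ls j := (abs_le.mp hs).1
    have hmid : 2 * min (lu j) (-(ls j)) - a ≤
        min (lu j) (min (lu j - ls j) (-(2 * ls j))) :=
      le_min (by linarith) (le_min (by linarith) (by linarith))
    exact ⟨by linarith, hmid, le_min (by linarith) (by linarith)⟩
  have h1 : ∑ j ∈ Finset.range k, ls j ≤ -S := by
    rw [hSdef, ← Finset.sum_neg_distrib]
    exact Finset.sum_le_sum fun j hj => (hpt j hj).1
  have h2 : 2 * S - (k:ℝ) * a ≤ ∑ j ∈ Finset.range k,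
      min (lu j) (min (lu j - ls j) (-(2 * ls j))) := by
    have h := Finset.sum_le_sum fun j hj => (hpt j hj).2.1
    rw [Finset.sum_sub_distrib, ← Finset.mul_sum, Finset.sum_const, nsmul_eq_mul] at h
    simpa using h
  have h3 : 6 * S - (k:ℝ) * (6 * a) ≤ ∑ j ∈ Finset.range k,
      min (3 * min (lu j) (min (lu j - ls j) (-(2 * ls j)))) 0 := by
    have h := Finset.sum_le_sum fun j hj => (hpt j hj).2.2
    rw [Finset.sum_sub_distrib, ← Finset.mul_sum, Finset.sum_const, nsmul_eq_mul] at h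
    simpa using h
  refine ⟨?_, ?_, ?_⟩
  · rw [one_div_mul_eq_div, div_lt_iff₀ hk0]
    nlinarith
  · rw [one_div_mul_eq_div, lt_div_iff₀ hk0]
    nlinarith
  · rw [one_div_mul_eq_div, lt_div_iff₀ hk0]
    nlinarith
end

section
/- Let (c_n) be defined by c_0 = 1 and c_{n+1} = min(e^{λ_n^e - δ} c_n, 100), where λ_n^e are reals and δ > 0. Suppose that for every i ≤ L-1 with c_i ≥ 1 and every i ≤ k ≤ L-1, the tail sums satisfy ∑_{m=i}^{L-1}(λ_m^e - δ) > a/2 with e^{a/2} ≥ 100. Then c_L = 100. -/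
/-- Lemma: the normalising sequence `c_n` saturates at `100` at time `L`. -/
theorem stmt_11 (L : ℕ) (hL : 1 ≤ L) (a δ : ℝ) (hδ : 0 < δ) (le : ℕ → ℝ)
    (c : ℕ → ℝ) (hc0 : c 0 = 1)
    (hcrec : ∀ n, c (n+1) = min (Real.exp (le n - δ) * c n) 100)
    (hA : (100 : ℝ) ≤ Real.exp (a/2))
    (htail : ∀ i < L, 1 ≤ c i → a/2 < ∑ m ∈ Finset.Ico i L, (le m - δ)) :
    c L = 100 := by
  classical
  have hcpos : ∀ n, 0 < c n := by
    intro n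
    induction n with
    | zero => simp [hc0]
    | succ k ih =>
      rw [hcrec]
      exact lt_min (mul_pos (Real.exp_pos _) ih) (by norm_num)
  set P : ℕ → Prop := fun n => n < L ∧ 1 ≤ c n with hP
  set i := Nat.findGreatest P L with hi
  have hPi : P i := Nat.findGreatest_spec (Nat.zero_le L) ⟨hL, by rw [hc0]⟩
  have hmax : ∀ m, i < m → m < L → c m < 1 := by
    intro m him hmL
    by_contra h
    exact Nat.findGreatest_is_greatest him hmL.le ⟨hmL, not_lt.mp h⟩
  have key : ∀ n, i < n → n ≤ L →
      c n = min (Real.exp (∑ m ∈ Finset.Ico i n, (le m - δ)) * c i) 100 := by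
    intro n
    induction n with
    | zero => intro h; omega
    | succ k ih =>
      intro hik hkL
      rcases Nat.lt_or_ge i k with h | h
      · have hkL' : k < L := hkL
        have hck := ih h hkL'.le
        have hlt : c k < 1 := hmax k h hkL'
        have hmin : min (Real.exp (∑ m ∈ Finset.Ico i k, (le m - δ)) * c i) 100
            = Real.exp (∑ m ∈ Finset.Ico i k, (le m - δ)) * c i := by
          rcases min_cases (Real.exp (∑ m ∈ Finset.Ico i k, (le m - δ)) * c i) 100 with
            ⟨h1, _⟩ | ⟨h1, _⟩
          · exact h1
          · exfalso; rw [hck, h1] at hlt; norm_num at hlt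
        have hckeq := hck.trans hmin
        have hstep : Real.exp (le k - δ) *
            (Real.exp (∑ m ∈ Finset.Ico i k, (le m - δ)) * c i)
            = Real.exp (∑ m ∈ Finset.Ico i (k+1), (le m - δ)) * c i := by
          rw [Finset.sum_Ico_succ_top h.le, Real.exp_add]; ring
        rw [hcrec k, hckeq, hstep]
      · have h' : i = k := le_antisymm (Nat.lt_succ_iff.mp hik) h
        subst h'
        rw [hcrec i]
        simp
  have hiL : i < L := hPi.1
  have hsum : a/2 < ∑ m ∈ Finset.Ico i L, (le m - δ) := htail i hiL hPi.2
  have hE : (100 : ℝ) ≤ Real.exp (∑ m ∈ Finset.Ico i L, (le m - δ)) :=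
    hA.trans (Real.exp_le_exp.mpr hsum.le)
  have hfin : (100 : ℝ) ≤ Real.exp (∑ m ∈ Finset.Ico i L, (le m - δ)) * c i := by
    calc (100 : ℝ) = 100 * 1 := by ring
    _ ≤ _ := mul_le_mul hE hPi.2 (by norm_num) (le_trans (by norm_num) hE)
  rw [key L hiL le_rfl, min_eq_right hfin]
end

section
/- (Cotangent recursion for area-preserving linear maps) Let M be a 2×2 real matrix with det M = ±1 and ‖M‖ ≤ A. Let v^s be a unit vector, set λ^s = log ‖M v^s‖, and let v^u be any unit vector. Then |cot ∠(M v^u, M v^s)| ≤ e^{2λ^s} |cot ∠(v^u, v^s)| + A². -/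
/-!
A map with `|det M| = 1` preserves the area form, so `sin ∠(Mu, Mv) ‖Mu‖ ‖Mv‖ = sin ∠(u, v)` for
unit vectors, and `cot ∠(Mu, Mv) = ⟪Mu, Mv⟫ / sin ∠(u, v)`. Splitting `u = cos θ • v + w` with
`‖w‖ = sin θ` gives `⟪Mu, Mv⟫ = cos θ ‖Mv‖² + ⟪Mw, Mv⟫` and `|⟪Mw, Mv⟫| ≤ ‖M‖² sin θ`; dividing
by `sin θ` yields the recursion, since `‖Mv‖² = e^{2λ}`.
-/

open InnerProductGeometry

open scoped RealInnerProductSpace EuclideanSpace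

section TwoDim

variable {E : Type*} [NormedAddCommGroup E] [InnerProductSpace ℝ E] [Fact (Module.finrank ℝ E = 2)]

theorem Orientation.areaForm_map_linearMap (o : Orientation ℝ E (Fin 2)) (f : E →ₗ[ℝ] E)
    (x y : E) : o.areaForm (f x) (f y) = LinearMap.det f * o.areaForm x y := by
  simp only [Orientation.areaForm_to_volumeForm, o.volumeForm_robust _
    (o.finOrthonormalBasis_orientation two_pos Fact.out)]
  rw [← Module.Basis.det_comp]
  congr 1
  ext i; fin_cases i <;> rfl

theorem Orientation.abs_areaForm_eq_sin_angle_mul_norm_mul_norm (o : Orientation ℝ E (Fin 2))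
    (x y : E) :
    |o.areaForm x y| = Real.sin (angle x y) * (‖x‖ * ‖y‖) := by
  rw [sin_angle_mul_norm_mul_norm, real_inner_self_eq_norm_sq, real_inner_self_eq_norm_sq,
    ← o.inner_sq_add_areaForm_sq x y, ← Real.sqrt_sq_eq_abs]
  ring_nf

theorem sin_angle_map_mul_norm_mul_norm {f : E →ₗ[ℝ] E} (hf : |LinearMap.det f| = 1) (x y : E) :
    Real.sin (angle (f x) (f y)) * (‖f x‖ * ‖f y‖) = Real.sin (angle x y) * (‖x‖ * ‖y‖) := by
  have : FiniteDimensional ℝ E := .of_fact_finrank_eq_two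
  let o : Orientation ℝ E (Fin 2) :=
    (Module.finBasisOfFinrankEq ℝ E Fact.out).orientation
  simp only [← o.abs_areaForm_eq_sin_angle_mul_norm_mul_norm, o.areaForm_map_linearMap, abs_mul,
    hf, one_mul]

end TwoDim

section

variable {V F : Type*} [NormedAddCommGroup V] [InnerProductSpace ℝ V]
  [NormedAddCommGroup F] [InnerProductSpace ℝ F]

theorem cos_angle_div_sin_angle (x y : V) :
    Real.cos (angle x y) / Real.sin (angle x y) =
      ⟪x, y⟫ / (Real.sin (angle x y) * (‖x‖ * ‖y‖)) := by
  rcases eq_or_ne x 0 with rfl | hx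
  · simp
  rcases eq_or_ne y 0 with rfl | hy
  · simp
  rw [← cos_angle_mul_norm_mul_norm, mul_div_mul_right _ _ (by positivity)]

theorem norm_sub_cos_angle_smul_eq_sin_angle {u v : V} (hu : ‖u‖ = 1) (hv : ‖v‖ = 1) :
    ‖u - Real.cos (angle u v) • v‖ = Real.sin (angle u v) := by
  have hinner : ⟪u, v⟫ = Real.cos (angle u v) := by
    simpa [hu, hv] using (cos_angle_mul_norm_mul_norm u v).symm
  refine (sq_eq_sq₀ (norm_nonneg _) (sin_angle_nonneg u v)).1 ?_
  rw [norm_sub_sq_real, real_inner_smul_right, norm_smul, hinner, hu, hv, Real.norm_eq_abs,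
    Real.sin_sq]
  ring_nf; rw [sq_abs]; ring

theorem abs_inner_map_le {u v : V} (hu : ‖u‖ = 1) (hv : ‖v‖ = 1) (M : V →L[ℝ] F) :
    |⟪M u, M v⟫| ≤ ‖M v‖ ^ 2 * |Real.cos (angle u v)| + ‖M‖ ^ 2 * Real.sin (angle u v) := by
  set w := u - Real.cos (angle u v) • v
  have hsplit : ⟪M u, M v⟫ = Real.cos (angle u v) * ‖M v‖ ^ 2 + ⟪M w, M v⟫ := by
    conv_lhs => rw [← add_sub_cancel (Real.cos (angle u v) • v) u]
    rw [map_add, map_smul, inner_add_left, real_inner_smul_left, real_inner_self_eq_norm_sq]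
  have hw : |⟪M w, M v⟫| ≤ ‖M‖ ^ 2 * Real.sin (angle u v) :=
    calc |⟪M w, M v⟫| ≤ ‖M w‖ * ‖M v‖ := abs_real_inner_le_norm _ _
      _ ≤ (‖M‖ * ‖w‖) * (‖M‖ * ‖v‖) := by gcongr <;> exact M.le_opNorm _
      _ = ‖M‖ ^ 2 * Real.sin (angle u v) := by
        rw [norm_sub_cos_angle_smul_eq_sin_angle hu hv, hv]; ring
  calc |⟪M u, M v⟫| ≤ |Real.cos (angle u v) * ‖M v‖ ^ 2| + |⟪M w, M v⟫| := hsplit ▸ abs_add_le _ _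
    _ = ‖M v‖ ^ 2 * |Real.cos (angle u v)| + |⟪M w, M v⟫| := by
      rw [abs_mul, abs_of_nonneg (sq_nonneg ‖M v‖), mul_comm]
    _ ≤ _ := by gcongr

end

/-- Cotangent recursion for area-preserving linear maps of the plane. -/
theorem stmt_14 (M : EuclideanSpace ℝ (Fin 2) →L[ℝ] EuclideanSpace ℝ (Fin 2))
    (A : ℝ) (hdet : |LinearMap.det (M : EuclideanSpace ℝ (Fin 2) →ₗ[ℝ] EuclideanSpace ℝ (Fin 2))| = 1)
    (hA : ‖M‖ ≤ A)
    (vs vu : EuclideanSpace ℝ (Fin 2)) (hvs : ‖vs‖ = 1) (hvu : ‖vu‖ = 1)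
    (lams : ℝ) (hlams : lams = Real.log ‖M vs‖)
    (hangle : angle vu vs ∈ Set.Ioo 0 Real.pi) :
    |Real.cos (angle (M vu) (M vs)) / Real.sin (angle (M vu) (M vs))| ≤
      Real.exp (2 * lams) * |Real.cos (angle vu vs) / Real.sin (angle vu vs)| + A ^ 2 := by
  have hsin : 0 < Real.sin (angle vu vs) := Real.sin_pos_of_pos_of_lt_pi hangle.1 hangle.2
  have harea : Real.sin (angle (M vu) (M vs)) * (‖M vu‖ * ‖M vs‖) = Real.sin (angle vu vs) := by
    simpa [hvu, hvs] using sin_angle_map_mul_norm_mul_norm hdet vu vs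
  have hMvs : 0 < ‖M vs‖ :=
    (norm_nonneg _).lt_of_ne fun h ↦ hsin.ne' (by rw [← harea, ← h, mul_zero, mul_zero])
  have hexp : Real.exp (2 * lams) = ‖M vs‖ ^ 2 := by
    rw [hlams, mul_comm, Real.exp_mul, Real.exp_log hMvs]
    norm_cast
  rw [cos_angle_div_sin_angle, harea, abs_div, abs_div, abs_of_pos hsin, hexp, div_le_iff₀ hsin]
  calc |⟪M vu, M vs⟫|
      ≤ ‖M vs‖ ^ 2 * |Real.cos (angle vu vs)| + ‖M‖ ^ 2 * Real.sin (angle vu vs) :=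
        abs_inner_map_le hvu hvs M
    _ ≤ ‖M vs‖ ^ 2 * |Real.cos (angle vu vs)| + A ^ 2 * Real.sin (angle vu vs) := by
        gcongr
    _ = (‖M vs‖ ^ 2 * (|Real.cos (angle vu vs)| / Real.sin (angle vu vs)) + A ^ 2) *
          Real.sin (angle vu vs) := by
        field_simp
end

section
/- (Hyperbolic cone condition implies hyperbolic fixed point, cone part) Let G : U → R² be a C¹ map on an open set U ⊂ R², let p ∈ U be a fixed point of G, and let 0 < κ', κ'' < 1. Suppose DG_p maps the closure of the horizontal cone C(κ') = {(v,w) : |w| < κ'|v|} minus {0} into C(κ'/2), with ‖DG_p(u)‖ ≥ μ‖u‖ for all u ∈ C(κ') with μ > 1, and DG_p^{-1} maps the closure of the vertical cone C̃(κ'') = {(v,w) : |v| < κ''|w|} minus {0} into C̃(κ''/2) with ‖DG_p^{-1}(u)‖ ≥ μ‖u‖ for u ∈ C̃(κ''). Then DG_p has two real eigenvalues λ_1, λ_2 with |λ_1| > 1 > |λ_2|, i.e. p is a hyperbolic fixed point. -/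
/-- Slope fixed-point helper: a continuous map whose values on the cone slopes
stay strictly inside the half cone and expand has an "eigendirection". -/
lemma cone_slope_fixed (κ μ : ℝ) (hκ : 0 < κ) (F : ℝ → ℝ × ℝ) (hF : Continuous F)
    (h : ∀ w ∈ Set.Icc (-κ) κ, |(F w).2| < κ/2 * |(F w).1| ∧ μ * ‖((1:ℝ), w)‖ ≤ ‖F w‖) :
    ∃ w₀ ∈ Set.Icc (-κ) κ, ∃ l : ℝ, F w₀ = l • ((1:ℝ), w₀) ∧ μ ≤ |l| := by
  have hne : ∀ w ∈ Set.Icc (-κ) κ, (F w).1 ≠ 0 := by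
    intro w hw h0
    have h1 := (h w hw).1
    rw [h0, abs_zero, mul_zero] at h1
    exact absurd h1 (abs_nonneg _).not_gt
  set f : ℝ → ℝ := fun w => (F w).2 / (F w).1 with hf
  have hfc : ContinuousOn f (Set.Icc (-κ) κ) :=
    ContinuousOn.div (hF.snd.continuousOn) (hF.fst.continuousOn) hne
  have hbound : ∀ w ∈ Set.Icc (-κ) κ, |f w| < κ/2 := by
    intro w hw
    have h1 := (h w hw).1
    have hpos : 0 < |(F w).1| := abs_pos.mpr (hne w hw)
    rw [hf]
    simp only [abs_div]
    rw [div_lt_iff₀ hpos]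
    exact h1
  have hmem : ∀ w ∈ Set.Icc (-κ) κ, f w ∈ Set.Ioo (-κ) κ := by
    intro w hw
    have := hbound w hw
    have h2 : κ/2 < κ := by linarith
    have := abs_lt.mp (lt_trans this h2)
    exact ⟨this.1, this.2⟩
  have hle : -κ ≤ κ := by linarith
  set g : ℝ → ℝ := fun w => f w - w with hg
  have hgc : ContinuousOn g (Set.Icc (-κ) κ) := hfc.sub continuousOn_id
  have hga : 0 < g (-κ) := by
    have := (hmem (-κ) (by constructor <;> linarith)).1
    simp [hg]; linarith
  have hgb : g κ < 0 := by
    have := (hmem κ (by constructor <;> linarith)).2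
    simp [hg]; linarith
  have : (0:ℝ) ∈ g '' Set.Icc (-κ) κ := by
    apply intermediate_value_Icc' hle hgc
    exact ⟨le_of_lt hgb, le_of_lt hga⟩
  obtain ⟨w₀, hw₀, hgw₀⟩ := this
  have hfw₀ : f w₀ = w₀ := by simpa [hg, sub_eq_zero] using hgw₀
  refine ⟨w₀, hw₀, (F w₀).1, ?_, ?_⟩
  · have h2 : (F w₀).2 = w₀ * (F w₀).1 := (div_eq_iff (hne w₀ hw₀)).mp hfw₀
    ext
    · simp
    · simp [h2, mul_comm]
  · have hx : (0:ℝ) < ‖((1:ℝ), w₀)‖ :=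
      lt_of_lt_of_le one_pos (by simpa using norm_fst_le ((1:ℝ), w₀))
    have h2 := (h w₀ hw₀).2
    have h3 : ‖F w₀‖ = |(F w₀).1| * ‖((1:ℝ), w₀)‖ := by
      have h2' : (F w₀).2 = w₀ * (F w₀).1 := (div_eq_iff (hne w₀ hw₀)).mp hfw₀
      have : F w₀ = (F w₀).1 • ((1:ℝ), w₀) := by
        ext
        · simp
        · simp [h2', mul_comm]
      conv_lhs => rw [this]
      rw [norm_smul, Real.norm_eq_abs]
    rw [h3] at h2
    exact le_of_mul_le_mul_right h2 hx

/-- Strict invariant cone conditions at a fixed point imply hyperbolicity of the fixed point. -/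
theorem stmt_16 (G : ℝ × ℝ → ℝ × ℝ) (U : Set (ℝ × ℝ)) (hU : IsOpen U)
    (p : ℝ × ℝ) (hp : p ∈ U) (hfix : G p = p)
    (T : (ℝ × ℝ) ≃L[ℝ] (ℝ × ℝ))
    (hderiv : HasFDerivAt G (T : (ℝ × ℝ) →L[ℝ] (ℝ × ℝ)) p)
    (κ' κ'' μ : ℝ) (hκ'0 : 0 < κ') (hκ'1 : κ' < 1) (hκ''0 : 0 < κ'') (hκ''1 : κ'' < 1)
    (hμ : 1 < μ)
    (hcone1 : ∀ u : ℝ × ℝ, u ≠ 0 → |u.2| ≤ κ' * |u.1| →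
      (|(T u).2| < κ'/2 * |(T u).1| ∧ μ * ‖u‖ ≤ ‖T u‖))
    (hcone2 : ∀ u : ℝ × ℝ, u ≠ 0 → |u.1| ≤ κ'' * |u.2| →
      (|(T.symm u).1| < κ''/2 * |(T.symm u).2| ∧ μ * ‖u‖ ≤ ‖T.symm u‖)) :
    ∃ l1 l2 : ℝ,
      Module.End.HasEigenvalue (T.toLinearEquiv.toLinearMap : Module.End ℝ (ℝ × ℝ)) l1 ∧
      Module.End.HasEigenvalue (T.toLinearEquiv.toLinearMap : Module.End ℝ (ℝ × ℝ)) l2 ∧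
      1 < |l1| ∧ |l2| < 1 := by
  -- First eigenvalue from horizontal cone
  obtain ⟨w₁, hw₁, l1, hl1, hl1μ⟩ := cone_slope_fixed κ' μ hκ'0 (fun w => T (1, w))
    (T.continuous.comp (continuous_const.prodMk continuous_id))
    (by
      intro w hw
      have hne : ((1:ℝ), w) ≠ 0 := by
        intro h
        have := congrArg Prod.fst h
        simp at this
      have habs : |((1:ℝ), w).2| ≤ κ' * |((1:ℝ), w).1| := by
        simp only []
        rw [abs_one, mul_one]
        exact abs_le.mpr ⟨hw.1, hw.2⟩
      exact hcone1 _ hne habs)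
  -- Second eigenvalue from vertical cone (via T.symm)
  obtain ⟨w₂, hw₂, r, hr, hrμ⟩ := cone_slope_fixed κ'' μ hκ''0
    (fun w => ((T.symm (w, 1)).2, (T.symm (w, 1)).1))
    (by
      have hc : Continuous (fun w : ℝ => T.symm (w, 1)) :=
        T.symm.continuous.comp (continuous_id.prodMk continuous_const)
      exact hc.snd.prodMk hc.fst)
    (by
      intro w hw
      have hne : ((w:ℝ), (1:ℝ)) ≠ 0 := by
        intro h
        have := congrArg Prod.snd h
        simp at this
      have habs : |((w:ℝ), (1:ℝ)).1| ≤ κ'' * |((w:ℝ), (1:ℝ)).2| := by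
        simp only []
        rw [abs_one, mul_one]
        exact abs_le.mpr ⟨hw.1, hw.2⟩
      obtain ⟨hA, hB⟩ := hcone2 _ hne habs
      constructor
      · exact hA
      · have hnorm : ‖((1:ℝ), w)‖ = ‖((w:ℝ), (1:ℝ))‖ := by
          simp [Prod.norm_def, max_comm]
        have hnorm2 : ‖((T.symm (w, 1)).2, (T.symm (w, 1)).1)‖ = ‖T.symm (w, 1)‖ := by
          simp [Prod.norm_def, max_comm]
        rw [hnorm, hnorm2]
        exact hB)
  -- unpack second: T.symm (w₂,1) = r • (w₂,1)
  have hr1 : (T.symm (w₂, 1)).2 = r := by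
    have := congrArg Prod.fst hr
    simpa using this
  have hr2 : (T.symm (w₂, 1)).1 = r * w₂ := by
    have := congrArg Prod.snd hr
    simpa using this
  have hsymm : T.symm (w₂, 1) = r • ((w₂:ℝ), (1:ℝ)) := by
    ext
    · simp [hr2]
    · simp [hr1]
  have hrne : r ≠ 0 := by
    intro h0
    rw [h0] at hrμ
    simp at hrμ
    linarith
  have hTx2 : T ((w₂:ℝ), (1:ℝ)) = r⁻¹ • ((w₂:ℝ), (1:ℝ)) := by
    have h1 : T (T.symm (w₂, 1)) = (w₂, 1) := T.apply_symm_apply _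
    rw [hsymm, map_smul] at h1
    rw [eq_inv_smul_iff₀ hrne]
    exact h1
  -- eigenvectors
  refine ⟨l1, r⁻¹, ?_, ?_, ?_, ?_⟩
  · apply Module.End.hasEigenvalue_of_hasEigenvector (x := ((1:ℝ), w₁))
    constructor
    · rw [Module.End.mem_eigenspace_iff]
      exact hl1
    · intro h
      have := congrArg Prod.fst h
      simp at this
  · apply Module.End.hasEigenvalue_of_hasEigenvector (x := ((w₂:ℝ), (1:ℝ)))
    constructor
    · rw [Module.End.mem_eigenspace_iff]
      exact hTx2
    · intro h
      have := congrArg Prod.snd h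
      simp at this
  · linarith
  · rw [abs_inv]
    have h1 : 1 < |r| := lt_of_lt_of_le hμ hrμ
    exact inv_lt_one_of_one_lt₀ h1
end

section
/- (Degree/Lefschetz argument for strip crossing) Let U = {(v,w) : |v| ≤ r, |w| ≤ τ} be a rectangle, let R₁ ⊂ U be a compact set homeomorphic to a rectangle whose boundary consists of two disjoint vertical arcs contained in the interiors of the two vertical components and two horizontal arcs, and similarly R₂ a horizontal strip of U crossing R₁. Suppose G : R₁ → R₂ is a homeomorphism mapping the left/right (vertical) boundary arcs of R₁ onto the left/right boundary arcs of R₂ and the top/bottom (horizontal) boundary arcs of R₁ onto the top/bottom boundary arcs of R₂, where the vertical boundary of R₂ lies outside R₁ horizontally and the horizontal boundary of R₂ lies strictly inside R₁ vertically. Then G has a fixed point in R₁ ∩ R₂. -/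
/-!
The hypotheses say that the displacement `G p - p` points horizontally outward, in opposite
directions, on the two vertical sides of `R₁` (up to a reflection `x ↦ -x`), and vertically inward
on its two horizontal sides, since `G` throws the vertical sides onto `x = ±r` and the horizontal
sides into the open band `|y| < τ`. The two-dimensional Poincaré–Miranda theorem, applied to the
displacement pulled back to the unit square, then produces a fixed point. Injectivity shows
that the two vertical sides cannot land on the same line `x = ±r`: otherwise three corners of `R₁`
would be sent to the two points of that line on the boundary of `R₂`.

Poincaré–Miranda itself is proved combinatorially: on a fine grid, label each node by which sign
condition the field violates first; a discrete winding-number count forces a grid cell carrying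
all three labels, and uniform continuity turns such a cell into a point where `‖F‖` is smaller
than its minimum, unless `F` vanishes.
-/

open Set

open Finset in
theorem sum_range_grid_circulation {M : Type*} [AddCommGroup M] (H V : ℕ → ℕ → M) (n : ℕ) :
    ∑ i ∈ range n, ∑ j ∈ range n, ((H i j - H i (j + 1)) + (V (i + 1) j - V i j)) =
      ∑ i ∈ range n, (H i 0 - H i n) + ∑ j ∈ range n, (V n j - V 0 j) := by
  simp only [sum_add_distrib]
  congr 1
  · exact sum_congr rfl fun i _ => sum_range_sub' (H i) n
  · rw [sum_comm]
    exact sum_congr rfl fun j _ => sum_range_sub (V · j) n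

/-- A discrete winding number: its circulation around a closed path that misses one of the three
labels is zero. -/
def spernerWeight (x y : Fin 3) : ℤ := if x = 2 ∨ y = 2 then 0 else (y.val : ℤ) - x.val

theorem spernerWeight_eq_zero_of_ne_one :
    ∀ {x y : Fin 3}, x ≠ 1 → y ≠ 1 → spernerWeight x y = 0 := by
  decide

theorem spernerWeight_eq_zero_of_ne_zero :
    ∀ {x y : Fin 3}, x ≠ 0 → y ≠ 0 → spernerWeight x y = 0 := by
  decide

theorem spernerWeight_eq_sub_of_ne_two :
    ∀ {x y : Fin 3}, x ≠ 2 → y ≠ 2 → spernerWeight x y = (y.val : ℤ) - x.val := by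
  decide

theorem eq_of_spernerWeight_circulation_ne_zero : ∀ {x y z u : Fin 3},
    (spernerWeight x y - spernerWeight u z) + (spernerWeight y z - spernerWeight x u) ≠ 0 →
      ∀ k, k = x ∨ k = y ∨ k = z ∨ k = u := by
  decide

theorem exists_cell_forall_label (n : ℕ) (L : ℕ → ℕ → Fin 3)
    (hleft : ∀ j ≤ n, L 0 j = 0) (hbot : ∀ i ≤ n, L i 0 ≠ 1)
    (hright : ∀ j ≤ n, L n j ≠ 0) (htop : ∀ i ≤ n, L i n ≠ 2) :
    ∃ i < n, ∃ j < n, ∀ k : Fin 3, ∃ a ≤ 1, ∃ b ≤ 1, L (i + a) (j + b) = k := by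
  open Finset in
  by_contra! hmiss
  set H : ℕ → ℕ → ℤ := fun i j => spernerWeight (L i j) (L (i + 1) j)
  set V : ℕ → ℕ → ℤ := fun i j => spernerWeight (L i j) (L i (j + 1))
  have hcells : ∀ i ∈ range n,
      ∑ j ∈ range n, ((H i j - H i (j + 1)) + (V (i + 1) j - V i j)) = 0 := by
    refine fun i hi => sum_eq_zero fun j hj => ?_
    obtain ⟨k, hk⟩ := hmiss i (mem_range.1 hi) j (mem_range.1 hj)
    by_contra hne
    rcases eq_of_spernerWeight_circulation_ne_zero hne k with h | h | h | h
    · exact hk 0 zero_le_one 0 zero_le_one h.symm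
    · exact hk 1 le_rfl 0 zero_le_one h.symm
    · exact hk 1 le_rfl 1 le_rfl h.symm
    · exact hk 0 zero_le_one 1 le_rfl h.symm
  have hbottom : ∀ i ∈ range n, H i 0 = 0 := fun i hi =>
    spernerWeight_eq_zero_of_ne_one (hbot i (mem_range.1 hi).le) (hbot (i + 1) (mem_range.1 hi))
  have hsides : ∀ j ∈ range n, V n j - V 0 j = 0 := by
    intro j hj
    have hj := mem_range.1 hj
    show spernerWeight (L n j) (L n (j + 1)) - spernerWeight (L 0 j) (L 0 (j + 1)) = 0
    rw [spernerWeight_eq_zero_of_ne_zero (hright j hj.le) (hright (j + 1) hj), hleft j hj.le,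
      hleft (j + 1) hj]
    rfl
  have htop' : ∑ i ∈ range n, H i n = 1 := by
    have hcorner : L n n = 1 := by
      have := hright n le_rfl; have := htop n le_rfl; omega
    rw [sum_congr rfl fun i hi => spernerWeight_eq_sub_of_ne_two (htop i (mem_range.1 hi).le)
      (htop (i + 1) (mem_range.1 hi)), sum_range_sub (fun i => ((L i n).val : ℤ)), hcorner,
      hleft n le_rfl]
    rfl
  have := sum_range_grid_circulation H V n
  rw [sum_eq_zero hcells, sum_sub_distrib, sum_eq_zero hbottom, htop', sum_eq_zero hsides] at this
  norm_num at this

noncomputable def mirandaLabel (v : ℝ × ℝ) : Fin 3 :=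
  if v.1 < 0 then 0 else if v.2 < 0 then 1 else 2

theorem mirandaLabel_eq_zero_iff {v : ℝ × ℝ} : mirandaLabel v = 0 ↔ v.1 < 0 := by
  unfold mirandaLabel; split_ifs <;> simp_all

theorem mirandaLabel_ne_one_of_pos {v : ℝ × ℝ} (h : 0 < v.2) : mirandaLabel v ≠ 1 := by
  unfold mirandaLabel; split_ifs <;> simp_all [h.not_gt]

theorem mirandaLabel_ne_two_of_neg {v : ℝ × ℝ} (h : v.2 < 0) : mirandaLabel v ≠ 2 := by
  unfold mirandaLabel; split_ifs <;> simp_all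

theorem nonneg_and_neg_of_mirandaLabel_eq_one {v : ℝ × ℝ} (h : mirandaLabel v = 1) :
    0 ≤ v.1 ∧ v.2 < 0 := by
  unfold mirandaLabel at h; split_ifs at h <;> simp_all

theorem nonneg_of_mirandaLabel_eq_two {v : ℝ × ℝ} (h : mirandaLabel v = 2) : 0 ≤ v.2 := by
  unfold mirandaLabel at h; split_ifs at h <;> simp_all

theorem abs_sub_div_le_of_le_one {m : ℝ} (hm : 0 < m) (i : ℕ) {a a' : ℕ} (ha : a ≤ 1)
    (ha' : a' ≤ 1) : |((i + a : ℕ) : ℝ) / m - ((i + a' : ℕ) : ℝ) / m| ≤ 1 / m := by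
  rw [← sub_div, abs_div, abs_of_pos hm, div_le_div_iff_of_pos_right hm, abs_le]
  have : (a : ℝ) ≤ 1 := by exact_mod_cast ha
  have : (a' : ℝ) ≤ 1 := by exact_mod_cast ha'
  push_cast
  constructor <;> linarith [(a.cast_nonneg : (0 : ℝ) ≤ a), (a'.cast_nonneg : (0 : ℝ) ≤ a')]

theorem exists_sign_pattern_of_unitSquare (F : ℝ × ℝ → ℝ × ℝ)
    (hleft : ∀ t ∈ Icc (0 : ℝ) 1, (F (0, t)).1 < 0)
    (hright : ∀ t ∈ Icc (0 : ℝ) 1, 0 < (F (1, t)).1)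
    (hbot : ∀ s ∈ Icc (0 : ℝ) 1, 0 < (F (s, 0)).2)
    (htop : ∀ s ∈ Icc (0 : ℝ) 1, (F (s, 1)).2 < 0) {η : ℝ} (hη : 0 < η) :
    ∃ A ∈ Icc (0 : ℝ) 1 ×ˢ Icc (0 : ℝ) 1, ∃ B ∈ Icc (0 : ℝ) 1 ×ˢ Icc (0 : ℝ) 1,
      ∃ C ∈ Icc (0 : ℝ) 1 ×ˢ Icc (0 : ℝ) 1, dist A B < η ∧ dist C B < η ∧
        (F A).1 < 0 ∧ (0 ≤ (F B).1 ∧ (F B).2 < 0) ∧ 0 ≤ (F C).2 := by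
  obtain ⟨m, hm⟩ := exists_nat_one_div_lt hη
  set N : ℕ := m + 1
  have hN : (0 : ℝ) < N := by positivity
  set pt : ℕ → ℕ → ℝ × ℝ := fun i j => ((i : ℝ) / N, (j : ℝ) / N)
  have hpt : ∀ i ≤ N, ∀ j ≤ N, pt i j ∈ Icc (0 : ℝ) 1 ×ˢ Icc (0 : ℝ) 1 := fun i hi j hj =>
    ⟨⟨by positivity, div_le_one_of_le₀ (by exact_mod_cast hi) hN.le⟩,
      ⟨by positivity, div_le_one_of_le₀ (by exact_mod_cast hj) hN.le⟩⟩
  have hpt_left : ∀ j, pt 0 j = (0, (j : ℝ) / N) := by simp [pt]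
  have hpt_right : ∀ j, pt N j = (1, (j : ℝ) / N) := by simp [pt, hN.ne']
  have hpt_bot : ∀ i, pt i 0 = ((i : ℝ) / N, 0) := by simp [pt]
  have hpt_top : ∀ i, pt i N = ((i : ℝ) / N, 1) := by simp [pt, hN.ne']
  obtain ⟨i, hi, j, hj, hcell⟩ := exists_cell_forall_label N (fun i j => mirandaLabel (F (pt i j)))
    (fun j hj => mirandaLabel_eq_zero_iff.2 <|
      hpt_left j ▸ hleft _ (hpt 0 (Nat.zero_le _) j hj).2)
    (fun i hi => mirandaLabel_ne_one_of_pos <| hpt_bot i ▸ hbot _ (hpt i hi 0 (Nat.zero_le _)).1)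
    (fun j hj h => (hright _ (hpt N le_rfl j hj).2).not_gt
      (hpt_right j ▸ mirandaLabel_eq_zero_iff.1 h))
    (fun i hi => mirandaLabel_ne_two_of_neg <| hpt_top i ▸ htop _ (hpt i hi N le_rfl).1)
  have hclose : ∀ a ≤ 1, ∀ b ≤ 1, ∀ a' ≤ 1, ∀ b' ≤ 1,
      dist (pt (i + a) (j + b)) (pt (i + a') (j + b')) < η := by
    intro a ha b hb a' ha' b' hb'
    refine lt_of_le_of_lt ?_ hm
    rw [Prod.dist_eq, max_le_iff, Real.dist_eq, Real.dist_eq]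
    have h := abs_sub_div_le_of_le_one hN
    push_cast [pt, N] at h ⊢
    exact ⟨h i ha ha', h j hb hb'⟩
  have hmem : ∀ a ≤ 1, ∀ b ≤ 1, pt (i + a) (j + b) ∈ Icc (0 : ℝ) 1 ×ˢ Icc (0 : ℝ) 1 :=
    fun a ha b hb => hpt _ (by omega) _ (by omega)
  obtain ⟨a₀, ha₀, b₀, hb₀, hA⟩ := hcell 0
  obtain ⟨a₁, ha₁, b₁, hb₁, hB⟩ := hcell 1
  obtain ⟨a₂, ha₂, b₂, hb₂, hC⟩ := hcell 2
  exact ⟨_, hmem _ ha₀ _ hb₀, _, hmem _ ha₁ _ hb₁, _, hmem _ ha₂ _ hb₂,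
    hclose _ ha₀ _ hb₀ _ ha₁ _ hb₁, hclose _ ha₂ _ hb₂ _ ha₁ _ hb₁,
    mirandaLabel_eq_zero_iff.1 hA, nonneg_and_neg_of_mirandaLabel_eq_one hB,
    nonneg_of_mirandaLabel_eq_two hC⟩

theorem norm_lt_of_sign_changes {u v w : ℝ × ℝ} {δ : ℝ} (hu : u.1 < 0) (hv₁ : 0 ≤ v.1)
    (hv₂ : v.2 < 0) (hw : 0 ≤ w.2) (huv : dist u v < δ) (hwv : dist w v < δ) : ‖v‖ < δ := by
  rw [Prod.dist_eq, max_lt_iff, Real.dist_eq, Real.dist_eq] at huv hwv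
  rw [Prod.norm_def, max_lt_iff, Real.norm_eq_abs, Real.norm_eq_abs, abs_of_nonneg hv₁,
    abs_of_neg hv₂]
  constructor
  · linarith [neg_abs_le (u.1 - v.1)]
  · linarith [le_abs_self (w.2 - v.2)]

/-- The Poincaré–Miranda theorem on the unit square. -/
theorem exists_zero_of_unitSquare (F : ℝ × ℝ → ℝ × ℝ)
    (hF : ContinuousOn F (Icc (0 : ℝ) 1 ×ˢ Icc (0 : ℝ) 1))
    (hleft : ∀ t ∈ Icc (0 : ℝ) 1, (F (0, t)).1 < 0)
    (hright : ∀ t ∈ Icc (0 : ℝ) 1, 0 < (F (1, t)).1)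
    (hbot : ∀ s ∈ Icc (0 : ℝ) 1, 0 < (F (s, 0)).2)
    (htop : ∀ s ∈ Icc (0 : ℝ) 1, (F (s, 1)).2 < 0) :
    ∃ p ∈ Icc (0 : ℝ) 1 ×ˢ Icc (0 : ℝ) 1, F p = 0 := by
  by_contra! hne
  have hQ : IsCompact (Icc (0 : ℝ) 1 ×ˢ Icc (0 : ℝ) 1) := isCompact_Icc.prod isCompact_Icc
  obtain ⟨q, hq, hmin⟩ := hQ.exists_isMinOn
    ((nonempty_Icc.2 zero_le_one).prod (nonempty_Icc.2 zero_le_one))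
    (continuous_norm.comp_continuousOn hF)
  obtain ⟨η, hη, hunif⟩ := Metric.uniformContinuousOn_iff.1
    (hQ.uniformContinuousOn_of_continuous hF) ‖F q‖ (norm_pos_iff.2 (hne q hq))
  obtain ⟨A, hA, B, hB, C, hC, hAB, hCB, hFA, hFB, hFC⟩ :=
    exists_sign_pattern_of_unitSquare F hleft hright hbot htop hη
  exact (norm_lt_of_sign_changes hFA hFB.1 hFB.2 hFC (hunif A hA B hB hAB)
    (hunif C hC B hB hCB)).not_ge (hmin hB)

def verticalStrip (a b : ℝ) (ψ₁ ψ₂ : ℝ → ℝ) : Set (ℝ × ℝ) :=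
  {p | p.2 ∈ Icc a b ∧ p.1 ∈ Icc (ψ₁ p.2) (ψ₂ p.2)}

theorem exists_zero_of_verticalStrip {a b : ℝ} (hab : a ≤ b) {ψ₁ ψ₂ : ℝ → ℝ}
    (hψ₁ : ContinuousOn ψ₁ (Icc a b)) (hψ₂ : ContinuousOn ψ₂ (Icc a b))
    (hψ : ∀ w ∈ Icc a b, ψ₁ w ≤ ψ₂ w) {F : ℝ × ℝ → ℝ × ℝ}
    (hF : ContinuousOn F (verticalStrip a b ψ₁ ψ₂))
    (hleft : ∀ w ∈ Icc a b, (F (ψ₁ w, w)).1 < 0) (hright : ∀ w ∈ Icc a b, 0 < (F (ψ₂ w, w)).1)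
    (hbot : ∀ p ∈ verticalStrip a b ψ₁ ψ₂, p.2 = a → 0 < (F p).2)
    (htop : ∀ p ∈ verticalStrip a b ψ₁ ψ₂, p.2 = b → (F p).2 < 0) :
    ∃ p ∈ verticalStrip a b ψ₁ ψ₂, F p = 0 := by
  set h : ℝ → ℝ := fun t => a + t * (b - a)
  set P : ℝ × ℝ → ℝ × ℝ := fun q => (ψ₁ (h q.2) + q.1 * (ψ₂ (h q.2) - ψ₁ (h q.2)), h q.2)
  have hh : MapsTo h (Icc 0 1) (Icc a b) := fun t ht =>
    ⟨by nlinarith [ht.1], by nlinarith [ht.2]⟩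
  have hP : MapsTo P (Icc 0 1 ×ˢ Icc 0 1) (verticalStrip a b ψ₁ ψ₂) := by
    rintro ⟨s, t⟩ ⟨hs, ht⟩
    have := hψ _ (hh ht)
    exact ⟨hh ht, by nlinarith [hs.1], by nlinarith [hs.2]⟩
  have hhc : Continuous h := by fun_prop
  have hψ₁h : ContinuousOn (fun q : ℝ × ℝ => ψ₁ (h q.2)) (Icc 0 1 ×ˢ Icc 0 1) :=
    hψ₁.comp (hhc.comp continuous_snd).continuousOn fun q hq => hh hq.2
  have hψ₂h : ContinuousOn (fun q : ℝ × ℝ => ψ₂ (h q.2)) (Icc 0 1 ×ˢ Icc 0 1) :=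
    hψ₂.comp (hhc.comp continuous_snd).continuousOn fun q hq => hh hq.2
  have hPc : ContinuousOn P (Icc 0 1 ×ˢ Icc 0 1) :=
    (hψ₁h.add (continuous_fst.continuousOn.mul (hψ₂h.sub hψ₁h))).prodMk
      (hhc.comp continuous_snd).continuousOn
  obtain ⟨q, hq, hFq⟩ := exists_zero_of_unitSquare (F ∘ P) (hF.comp hPc hP)
    (fun t ht => by simpa [P] using hleft _ (hh ht))
    (fun t ht => by simpa [P] using hright _ (hh ht))
    (fun s hs => hbot _ (hP ⟨hs, left_mem_Icc.2 zero_le_one⟩) (by simp [P, h]))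
    (fun s hs => htop _ (hP ⟨hs, right_mem_Icc.2 zero_le_one⟩) (by simp [P, h]))
  exact ⟨P q, hP hq, hFq⟩

/-- The sign of `c` fixes the orientation in which `G` moves the vertical sides. -/
theorem exists_fixedPoint_of_verticalStrip {a b c : ℝ} (hab : a ≤ b) {ψ₁ ψ₂ : ℝ → ℝ}
    (hψ₁ : ContinuousOn ψ₁ (Icc a b)) (hψ₂ : ContinuousOn ψ₂ (Icc a b))
    (hψ : ∀ w ∈ Icc a b, ψ₁ w ≤ ψ₂ w) {G : ℝ × ℝ → ℝ × ℝ}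
    (hG : ContinuousOn G (verticalStrip a b ψ₁ ψ₂))
    (hleft : ∀ w ∈ Icc a b, c * ((G (ψ₁ w, w)).1 - ψ₁ w) < 0)
    (hright : ∀ w ∈ Icc a b, 0 < c * ((G (ψ₂ w, w)).1 - ψ₂ w))
    (hbot : ∀ p ∈ verticalStrip a b ψ₁ ψ₂, p.2 = a → a < (G p).2)
    (htop : ∀ p ∈ verticalStrip a b ψ₁ ψ₂, p.2 = b → (G p).2 < b) :
    ∃ p ∈ verticalStrip a b ψ₁ ψ₂, G p = p := by
  have hc : c ≠ 0 := by
    rintro rfl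
    simpa using hleft a (left_mem_Icc.2 hab)
  obtain ⟨p, hp, hFp⟩ := exists_zero_of_verticalStrip hab hψ₁ hψ₂ hψ
    (F := fun p => (c * ((G p).1 - p.1), (G p).2 - p.2))
    ((continuousOn_const.mul ((continuous_fst.comp_continuousOn hG).sub continuousOn_fst)).prodMk
      ((continuous_snd.comp_continuousOn hG).sub continuousOn_snd))
    hleft hright
    (fun p hp hp₂ => by linarith [hbot p hp hp₂]) (fun p hp hp₂ => by linarith [htop p hp hp₂])
  simp only [Prod.mk_eq_zero, mul_eq_zero, hc, false_or, sub_eq_zero] at hFp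
  exact ⟨p, hp, Prod.ext hFp.1 hFp.2⟩

theorem Set.InjOn.false_of_three_to_two {α β : Type*} {f : α → β} {s : Set α} (hf : InjOn f s)
    {x y z : α} (hx : x ∈ s) (hy : y ∈ s) (hz : z ∈ s) (hxy : x ≠ y) (hxz : x ≠ z) (hyz : y ≠ z)
    {u v : β} (hfx : f x = u ∨ f x = v) (hfy : f y = u ∨ f y = v) (hfz : f z = u ∨ f z = v) :
    False := by
  have := hf.eq_iff hx hy; have := hf.eq_iff hx hz; have := hf.eq_iff hy hz
  grind

theorem exists_vertical_sides_opposite {a b r : ℝ} (hab : a < b) {ψ₁ ψ₂ φ₁ φ₂ : ℝ → ℝ}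
    (hψ₁ : ContinuousOn ψ₁ (Icc a b)) (hψ₂ : ContinuousOn ψ₂ (Icc a b))
    (hψ : ∀ w ∈ Icc a b, ψ₁ w < ψ₂ w) {G : ℝ × ℝ → ℝ × ℝ}
    (hGc : ContinuousOn G (verticalStrip a b ψ₁ ψ₂)) (hGinj : InjOn G (verticalStrip a b ψ₁ ψ₂))
    (hvert : ∀ p ∈ verticalStrip a b ψ₁ ψ₂, (p.1 = ψ₁ p.2 ∨ p.1 = ψ₂ p.2) →
      ((G p).1 = -r ∨ (G p).1 = r))
    (hhor : ∀ p ∈ verticalStrip a b ψ₁ ψ₂, (p.2 = a ∨ p.2 = b) →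
      ((G p).2 = φ₁ (G p).1 ∨ (G p).2 = φ₂ (G p).1)) :
    ∃ c, (c = -r ∨ c = r) ∧ ∀ w ∈ Icc a b, (G (ψ₁ w, w)).1 = -c ∧ (G (ψ₂ w, w)).1 = c := by
  set S := verticalStrip a b ψ₁ ψ₂
  have ha : a ∈ Icc a b := left_mem_Icc.2 hab.le
  have hb : b ∈ Icc a b := right_mem_Icc.2 hab.le
  have hside_const : ∀ ψ : ℝ → ℝ, ContinuousOn ψ (Icc a b) →
      (∀ w ∈ Icc a b, ψ w = ψ₁ w ∨ ψ w = ψ₂ w) → MapsTo (fun w => (ψ w, w)) (Icc a b) S →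
      ∀ w ∈ Icc a b, (G (ψ w, w)).1 = (G (ψ a, a)).1 := fun ψ hψc hψside hmaps w hw =>
    isPreconnected_Icc.constant_of_mapsTo (T := {-r, r}) (toFinite _).isDiscrete
      (continuous_fst.comp_continuousOn (hGc.comp (hψc.prodMk continuousOn_id) hmaps))
      (fun w hw => hvert _ (hmaps hw) (hψside w hw)) hw ha
  have hleft : MapsTo (fun w => (ψ₁ w, w)) (Icc a b) S := fun w hw => ⟨hw, le_rfl, (hψ w hw).le⟩
  have hright : MapsTo (fun w => (ψ₂ w, w)) (Icc a b) S := fun w hw => ⟨hw, (hψ w hw).le, le_rfl⟩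
  have hconst₁ := hside_const ψ₁ hψ₁ (fun _ _ => Or.inl rfl) hleft
  have hconst₂ := hside_const ψ₂ hψ₂ (fun _ _ => Or.inr rfl) hright
  have hne : (G (ψ₁ a, a)).1 ≠ (G (ψ₂ a, a)).1 := by
    intro heq
    set c := (G (ψ₁ a, a)).1
    have hcorner : ∀ p ∈ S, (p.2 = a ∨ p.2 = b) → (G p).1 = c →
        G p = (c, φ₁ c) ∨ G p = (c, φ₂ c) := by
      intro p hp hp₂ hpc
      rcases hhor p hp hp₂ with h | h
      · exact Or.inl (Prod.ext hpc (hpc ▸ h))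
      · exact Or.inr (Prod.ext hpc (hpc ▸ h))
    exact hGinj.false_of_three_to_two (hleft ha) (hright ha) (hleft hb)
      (by simp [(hψ a ha).ne]) (by simp [hab.ne]) (by simp [hab.ne])
      (hcorner _ (hleft ha) (Or.inl rfl) rfl) (hcorner _ (hright ha) (Or.inl rfl) heq.symm)
      (hcorner _ (hleft hb) (Or.inr rfl) (hconst₁ b hb))
  refine ⟨(G (ψ₂ a, a)).1, hvert _ (hright ha) (Or.inr rfl), fun w hw => ⟨?_, hconst₂ w hw⟩⟩
  rw [hconst₁ w hw]
  rcases hvert _ (hleft ha) (Or.inl rfl) with h₁ | h₁ <;>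
    rcases hvert _ (hright ha) (Or.inr rfl) with h₂ | h₂ <;> simp_all

theorem stmt_17_general (r τ : ℝ) (hr : 0 < r) (hτ : 0 < τ)
    (ψ₁ ψ₂ φ₁ φ₂ : ℝ → ℝ)
    (hψc₁ : ContinuousOn ψ₁ (Set.Icc (-τ) τ)) (hψc₂ : ContinuousOn ψ₂ (Set.Icc (-τ) τ))
    (hψ : ∀ w ∈ Set.Icc (-τ) τ, -r < ψ₁ w ∧ ψ₁ w < ψ₂ w ∧ ψ₂ w < r)
    (hφ : ∀ v ∈ Set.Icc (-r) r, -τ < φ₁ v ∧ φ₁ v < φ₂ v ∧ φ₂ v < τ)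
    (R₁ R₂ : Set (ℝ × ℝ))
    (hR₁ : R₁ = {p : ℝ × ℝ | p.2 ∈ Set.Icc (-τ) τ ∧ p.1 ∈ Set.Icc (ψ₁ p.2) (ψ₂ p.2)})
    (hR₂ : R₂ = {p : ℝ × ℝ | p.1 ∈ Set.Icc (-r) r ∧ p.2 ∈ Set.Icc (φ₁ p.1) (φ₂ p.1)})
    (G : ℝ × ℝ → ℝ × ℝ) (hGc : ContinuousOn G R₁) (hGinj : Set.InjOn G R₁)
    (hGim : G '' R₁ = R₂)
    (hvert : ∀ p ∈ R₁, (p.1 = ψ₁ p.2 ∨ p.1 = ψ₂ p.2) → ((G p).1 = -r ∨ (G p).1 = r))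
    (hhor : ∀ p ∈ R₁, (p.2 = -τ ∨ p.2 = τ) →
      ((G p).2 = φ₁ (G p).1 ∨ (G p).2 = φ₂ (G p).1)) :
    ∃ p ∈ R₁ ∩ R₂, G p = p := by
  obtain rfl : R₁ = verticalStrip (-τ) τ ψ₁ ψ₂ := hR₁
  have hmapsTo : ∀ p ∈ verticalStrip (-τ) τ ψ₁ ψ₂, G p ∈ R₂ := fun p hp =>
    hGim ▸ mem_image_of_mem G hp
  have hhor_Ioo : ∀ p ∈ verticalStrip (-τ) τ ψ₁ ψ₂, (p.2 = -τ ∨ p.2 = τ) →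
      (G p).2 ∈ Ioo (-τ) τ := by
    intro p hp hp₂
    have hφG := hφ _ (hR₂ ▸ hmapsTo p hp).1
    rcases hhor p hp hp₂ with h | h <;> rw [h] <;> constructor <;> linarith
  obtain ⟨c, hc, hsides⟩ := exists_vertical_sides_opposite (by linarith) hψc₁ hψc₂
    (fun w hw => (hψ w hw).2.1) hGc hGinj hvert hhor
  obtain ⟨p, hp, hfix⟩ := exists_fixedPoint_of_verticalStrip (c := c) (by linarith) hψc₁ hψc₂
    (fun w hw => (hψ w hw).2.1.le) hGc
    (fun w hw => by
      rw [(hsides w hw).1]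
      rcases hc with rfl | rfl <;> nlinarith [hψ w hw])
    (fun w hw => by
      rw [(hsides w hw).2]
      rcases hc with rfl | rfl <;> nlinarith [hψ w hw])
    (fun p hp hp₂ => hp₂ ▸ (hhor_Ioo p hp (Or.inl hp₂)).1)
    (fun p hp hp₂ => hp₂ ▸ (hhor_Ioo p hp (Or.inr hp₂)).2)
  exact ⟨p, ⟨hp, hfix ▸ hmapsTo p hp⟩, hfix⟩

/-- Degree/Lefschetz argument: a regular map from a vertical strip onto a crossing horizontal
strip has a fixed point in the intersection of the strips. -/
theorem stmt_17 (r τ : ℝ) (hr : 0 < r) (hτ : 0 < τ)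
    (ψ₁ ψ₂ φ₁ φ₂ : ℝ → ℝ)
    (hψc₁ : ContinuousOn ψ₁ (Set.Icc (-τ) τ)) (hψc₂ : ContinuousOn ψ₂ (Set.Icc (-τ) τ))
    (hφc₁ : ContinuousOn φ₁ (Set.Icc (-r) r)) (hφc₂ : ContinuousOn φ₂ (Set.Icc (-r) r))
    (hψ : ∀ w ∈ Set.Icc (-τ) τ, -r < ψ₁ w ∧ ψ₁ w < ψ₂ w ∧ ψ₂ w < r)
    (hφ : ∀ v ∈ Set.Icc (-r) r, -τ < φ₁ v ∧ φ₁ v < φ₂ v ∧ φ₂ v < τ)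
    (R₁ R₂ : Set (ℝ × ℝ))
    (hR₁ : R₁ = {p : ℝ × ℝ | p.2 ∈ Set.Icc (-τ) τ ∧ p.1 ∈ Set.Icc (ψ₁ p.2) (ψ₂ p.2)})
    (hR₂ : R₂ = {p : ℝ × ℝ | p.1 ∈ Set.Icc (-r) r ∧ p.2 ∈ Set.Icc (φ₁ p.1) (φ₂ p.1)})
    (G : ℝ × ℝ → ℝ × ℝ) (hGc : ContinuousOn G R₁) (hGinj : Set.InjOn G R₁)
    (hGim : G '' R₁ = R₂)
    (hvert : ∀ p ∈ R₁, (p.1 = ψ₁ p.2 ∨ p.1 = ψ₂ p.2) → ((G p).1 = -r ∨ (G p).1 = r))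
    (hhor : ∀ p ∈ R₁, (p.2 = -τ ∨ p.2 = τ) →
      ((G p).2 = φ₁ (G p).1 ∨ (G p).2 = φ₂ (G p).1)) :
    ∃ p ∈ R₁ ∩ R₂, G p = p :=
  stmt_17_general r τ hr hτ ψ₁ ψ₂ φ₁ φ₂ hψc₁ hψc₂ hψ hφ R₁ R₂ hR₁ hR₂ G hGc hGinj hGim hvert hhor
end

section
/- (Cone propagation estimate) Let A_n, B_n > 0 and let g(v,w) = (A_n v + f(v,w), B_n w + h(v,w)) where f, h are C¹ with |∂_v f|, |∂_w f|, |∂_v h|, |∂_w h| ≤ ε on a domain. Let κ_n, κ_{n+1} > 0 satisfy κ_{n+1} > (B_n κ_n + ε + ε κ_n)/(A_n − ε − ε κ_n), with A_n − ε − εκ_n > 0. Then for every (v,w) in the domain, the differential Dg_{(v,w)} maps the cone C(κ_n) = {(a,b) : |b| ≤ κ_n|a|} into the cone C(κ_{n+1}) = {(ā,b̄) : |b̄| ≤ κ_{n+1}|ā|}, and moreover |ā| ≥ (A_n − ε − εκ_n)|a| for (a,b) ∈ C(κ_n). -/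
lemma decomp (L : (ℝ × ℝ) →L[ℝ] ℝ) (a b : ℝ) :
    L (a, b) = a * L (1, 0) + b * L (0, 1) := by
  have : ((a, b) : ℝ × ℝ) = a • ((1, 0) : ℝ × ℝ) + b • ((0, 1) : ℝ × ℝ) := by
    simp [Prod.ext_iff]
  rw [this, map_add, map_smul, map_smul]; simp [smul_eq_mul]

/-- Cone propagation estimate for a perturbed diagonal map of the plane. -/
theorem stmt_18 (An Bn ε κn κn1 : ℝ) (hAn : 0 < An) (hBn : 0 < Bn) (hε : 0 < ε)
    (hκn : 0 < κn) (hκn1 : 0 < κn1)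
    (hpos : 0 < An - ε - ε * κn)
    (hineq : (Bn * κn + ε + ε * κn) / (An - ε - ε * κn) < κn1)
    (U : Set (ℝ × ℝ)) (f h : ℝ × ℝ → ℝ) (g : ℝ × ℝ → ℝ × ℝ)
    (hg : ∀ p : ℝ × ℝ, g p = (An * p.1 + f p, Bn * p.2 + h p))
    (f' h' : ℝ × ℝ → (ℝ × ℝ) →L[ℝ] ℝ)
    (hf' : ∀ p ∈ U, HasFDerivAt f (f' p) p) (hh' : ∀ p ∈ U, HasFDerivAt h (h' p) p)
    (hbd : ∀ p ∈ U, |f' p (1, 0)| ≤ ε ∧ |f' p (0, 1)| ≤ ε ∧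
      |h' p (1, 0)| ≤ ε ∧ |h' p (0, 1)| ≤ ε) :
    ∀ p ∈ U, ∀ ab : ℝ × ℝ, |ab.2| ≤ κn * |ab.1| →
      (|Bn * ab.2 + h' p ab| ≤ κn1 * |An * ab.1 + f' p ab| ∧
        (An - ε - ε * κn) * |ab.1| ≤ |An * ab.1 + f' p ab|) := by
  intro p hp ab hab
  obtain ⟨hf1, hf2, hh1, hh2⟩ := hbd p hp
  obtain ⟨a, b⟩ := ab
  simp only at hab ⊢
  have hfab : |f' p (a, b)| ≤ (ε + ε * κn) * |a| := by
    rw [decomp]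
    calc |a * f' p (1, 0) + b * f' p (0, 1)|
        ≤ |a * f' p (1, 0)| + |b * f' p (0, 1)| := abs_add_le _ _
      _ ≤ |a| * ε + (κn * |a|) * ε := by
          rw [abs_mul, abs_mul]
          gcongr
      _ = (ε + ε * κn) * |a| := by ring
  have hhab : |h' p (a, b)| ≤ (ε + ε * κn) * |a| := by
    rw [decomp]
    calc |a * h' p (1, 0) + b * h' p (0, 1)|
        ≤ |a * h' p (1, 0)| + |b * h' p (0, 1)| := abs_add_le _ _
      _ ≤ |a| * ε + (κn * |a|) * ε := by
          rw [abs_mul, abs_mul]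
          gcongr
      _ = (ε + ε * κn) * |a| := by ring
  have hlow : (An - ε - ε * κn) * |a| ≤ |An * a + f' p (a, b)| := by
    have h0 := abs_sub_abs_le_abs_sub (An * a) (-(f' p (a, b)))
    rw [sub_neg_eq_add, abs_neg] at h0
    have h1 : |An * a| = An * |a| := by rw [abs_mul, abs_of_pos hAn]
    linarith
  refine ⟨?_, hlow⟩
  have hub : |Bn * b + h' p (a, b)| ≤ (Bn * κn + ε + ε * κn) * |a| := by
    calc |Bn * b + h' p (a, b)| ≤ |Bn * b| + |h' p (a, b)| := abs_add_le _ _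
      _ ≤ Bn * (κn * |a|) + (ε + ε * κn) * |a| := by
          rw [abs_mul, abs_of_pos hBn]; gcongr
      _ = (Bn * κn + ε + ε * κn) * |a| := by ring
  have hkey : (Bn * κn + ε + ε * κn) * |a| ≤ κn1 * ((An - ε - ε * κn) * |a|) := by
    have := (div_lt_iff₀ hpos).mp hineq
    nlinarith [abs_nonneg a]
  calc |Bn * b + h' p (a, b)| ≤ (Bn * κn + ε + ε * κn) * |a| := hub
    _ ≤ κn1 * ((An - ε - ε * κn) * |a|) := hkey
    _ ≤ κn1 * |An * a + f' p (a, b)| := by gcongr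
end
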